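/- arXiv:2104.14510 — 9 statements merged into one kernel-verified Lean document; each statement's English description precedes it below -/
import Mathlib

section
/- Let G be a simple graph and v a simplicial vertex of G such that d(N[v]) ≤ d(v), where d(U) is the number of edges with exactly one endpoint in U and d(v) = d({v}) = |N(v)|. Then the minimum size of a cluster edge deletion set of G equals the minimum size of a cluster edge deletion set of G − N[v] plus d(N[v]). -/
/-!
Deleting every edge that leaves the clique `N = N[v]`, together with an optimal solution for
`G - N`, gives the upper bound. Conversely, in an optimal solution `E` the cluster `C` of `v` lies
inside `N`, every edge leaving `C` belongs to `E`, and the edges of `E` inside `G - N` form a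
solution there. Since `N` is a clique, separating `C` from `N \ C` costs `|C| * |N \ C|` edges,
which is at least `|N| - 1 ≥ d(N)` as soon as `N \ C` is nonempty; hence `d(C) ≥ d(N)`.
-/

open scoped Classical

def IsClusterGraph {W : Type*} (H : SimpleGraph W) : Prop :=
  ∀ ⦃u v w : W⦄, H.Adj u v → H.Adj v w → u ≠ w → H.Adj u w

def closedNbhd {W : Type*} (G : SimpleGraph W) (v : W) : Set W :=
  insert v (G.neighborSet v)

noncomputable def cut {W : Type*} (G : SimpleGraph W) (U : Set W) : ℕ :=
  {e ∈ G.edgeSet | ∃ a ∈ U, ∃ b ∉ U, e = s(a, b)}.ncard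

noncomputable def clusterDelNum {W : Type*} (G : SimpleGraph W) : ℕ :=
  sInf {n | ∃ E ⊆ G.edgeSet, E.ncard = n ∧ IsClusterGraph (G.deleteEdges E)}

def IsSTCSolution {W : Type*} (G : SimpleGraph W) (E : Set (Sym2 W)) : Prop :=
  E ⊆ G.edgeSet ∧
    ∀ ⦃u w x : W⦄, (G.deleteEdges E).Adj u w → (G.deleteEdges E).Adj w x → u ≠ x →
      ¬(G.deleteEdges E).Adj u x → G.Adj u x

noncomputable def stcNum {W : Type*} (G : SimpleGraph W) : ℕ :=
  sInf {n | ∃ E : Set (Sym2 W), IsSTCSolution G E ∧ E.ncard = n}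

def P4At {W : Type*} (H : SimpleGraph W) (a b c d : W) : Prop :=
  a ≠ b ∧ a ≠ c ∧ a ≠ d ∧ b ≠ c ∧ b ≠ d ∧ c ≠ d ∧
    H.Adj a b ∧ H.Adj b c ∧ H.Adj c d ∧ ¬H.Adj a c ∧ ¬H.Adj b d ∧ ¬H.Adj a d

def C4At {W : Type*} (H : SimpleGraph W) (a b c d : W) : Prop :=
  a ≠ b ∧ a ≠ c ∧ a ≠ d ∧ b ≠ c ∧ b ≠ d ∧ c ≠ d ∧
    H.Adj a b ∧ H.Adj b c ∧ H.Adj c d ∧ H.Adj d a ∧ ¬H.Adj a c ∧ ¬H.Adj b d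

def TwoK2At {W : Type*} (H : SimpleGraph W) (a b c d : W) : Prop :=
  a ≠ b ∧ a ≠ c ∧ a ≠ d ∧ b ≠ c ∧ b ≠ d ∧ c ≠ d ∧
    H.Adj a b ∧ H.Adj c d ∧ ¬H.Adj a c ∧ ¬H.Adj a d ∧ ¬H.Adj b c ∧ ¬H.Adj b d

def C5At {W : Type*} (H : SimpleGraph W) (a b c d e : W) : Prop :=
  a ≠ b ∧ a ≠ c ∧ a ≠ d ∧ a ≠ e ∧ b ≠ c ∧ b ≠ d ∧ b ≠ e ∧ c ≠ d ∧ c ≠ e ∧ d ≠ e ∧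
    H.Adj a b ∧ H.Adj b c ∧ H.Adj c d ∧ H.Adj d e ∧ H.Adj e a ∧
    ¬H.Adj a c ∧ ¬H.Adj a d ∧ ¬H.Adj b d ∧ ¬H.Adj b e ∧ ¬H.Adj c e

def IsTriviallyPerfect {W : Type*} (H : SimpleGraph W) : Prop :=
  (¬∃ a b c d, P4At H a b c d) ∧ (¬∃ a b c d, C4At H a b c d)

def IsIndep {W : Type*} (H : SimpleGraph W) (s : Set W) : Prop :=
  s.Pairwise fun a b => ¬H.Adj a b

def IsSplit {W : Type*} (H : SimpleGraph W) : Prop :=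
  ∃ C : Set W, H.IsClique C ∧ IsIndep H Cᶜ

def IsPseudoSplit {W : Type*} (H : SimpleGraph W) : Prop :=
  (¬∃ a b c d, TwoK2At H a b c d) ∧ (¬∃ a b c d, C4At H a b c d)

noncomputable def sedNum {W : Type*} (G : SimpleGraph W) : ℕ :=
  sInf {n | ∃ E ⊆ G.edgeSet, E.ncard = n ∧ IsSplit (G.deleteEdges E)}

noncomputable def psdNum {W : Type*} (G : SimpleGraph W) : ℕ :=
  sInf {n | ∃ E ⊆ G.edgeSet, E.ncard = n ∧ IsPseudoSplit (G.deleteEdges E)}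

def IsTPCompletion {W : Type*} (G Gh : SimpleGraph W) : Prop :=
  G ≤ Gh ∧ IsTriviallyPerfect Gh

def IsMinimalTPCompletion {W : Type*} (G Gh : SimpleGraph W) : Prop :=
  IsTPCompletion G Gh ∧
    ∀ G' : SimpleGraph W, G ≤ G' → G' ≤ Gh → IsTriviallyPerfect G' → G' = Gh

noncomputable def tpcNum {W : Type*} (G : SimpleGraph W) : ℕ :=
  sInf {n | ∃ Gh : SimpleGraph W, IsTPCompletion G Gh ∧ (Gh.edgeSet \ G.edgeSet).ncard = n}

def IsMinTPCompletion {W : Type*} (G Gh : SimpleGraph W) : Prop :=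
  IsTPCompletion G Gh ∧
    ∀ G' : SimpleGraph W, IsTPCompletion G G' →
      (Gh.edgeSet \ G.edgeSet).ncard ≤ (G'.edgeSet \ G.edgeSet).ncard

def IsModule {W : Type*} (G : SimpleGraph W) (M : Set W) : Prop :=
  ∀ a ∈ M, ∀ b ∈ M, ∀ x ∉ M, (G.Adj a x ↔ G.Adj b x)

section

open Set SimpleGraph

variable {V : Type*} {G H : SimpleGraph V}

def cutEdges (G : SimpleGraph V) (U : Set V) : Set (Sym2 V) :=
  {e ∈ G.edgeSet | ∃ a ∈ U, ∃ b ∉ U, e = s(a, b)}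

lemma cut_eq_ncard_cutEdges (G : SimpleGraph V) (U : Set V) :
    cut G U = (cutEdges G U).ncard := rfl

lemma mk_mem_cutEdges {U : Set V} {a b : V} (h : G.Adj a b) (ha : a ∈ U) (hb : b ∉ U) :
    s(a, b) ∈ cutEdges G U :=
  ⟨h, a, ha, b, hb, rfl⟩

lemma exists_mem_of_mem_cutEdges {U : Set V} {e : Sym2 V} (he : e ∈ cutEdges G U) :
    ∃ a ∈ e, a ∈ U := by
  obtain ⟨-, a, ha, b, -, rfl⟩ := he
  exact ⟨a, Sym2.mem_mk_left a b, ha⟩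

lemma exists_notMem_of_mem_cutEdges {U : Set V} {e : Sym2 V} (he : e ∈ cutEdges G U) :
    ∃ b ∈ e, b ∉ U := by
  obtain ⟨-, a, -, b, hb, rfl⟩ := he
  exact ⟨b, Sym2.mem_mk_right a b, hb⟩

lemma cutEdges_singleton (G : SimpleGraph V) (v : V) : cutEdges G {v} = G.incidenceSet v := by
  ext e
  constructor
  · rintro ⟨he, a, rfl, b, -, rfl⟩
    exact ⟨he, Sym2.mem_mk_left a b⟩
  · rintro ⟨he, hv⟩
    obtain ⟨w, rfl⟩ := Sym2.mem_iff_exists.1 hv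
    exact mk_mem_cutEdges he rfl (G.ne_of_adj he).symm

lemma cut_singleton (G : SimpleGraph V) (v : V) : cut G {v} = (G.neighborSet v).ncard := by
  rw [cut_eq_ncard_cutEdges, cutEdges_singleton, ← Nat.card_coe_set_eq, ← Nat.card_coe_set_eq,
    Nat.card_congr (G.incidenceSetEquivNeighborSet v)]

lemma cut_eq_ncard_adj (G : SimpleGraph V) (U : Set V) :
    cut G U = {p : V × V | p.1 ∈ U ∧ p.2 ∉ U ∧ G.Adj p.1 p.2}.ncard := by
  have hinj :
      InjOn (fun p : V × V => s(p.1, p.2)) {p | p.1 ∈ U ∧ p.2 ∉ U ∧ G.Adj p.1 p.2} := by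
    rintro ⟨a, b⟩ ⟨ha, hb, -⟩ ⟨c, d⟩ ⟨hc, -, -⟩ h
    rcases Sym2.eq_iff.1 h with ⟨rfl, rfl⟩ | ⟨rfl, rfl⟩
    · rfl
    · exact absurd hc hb
  rw [cut_eq_ncard_cutEdges, ← hinj.ncard_image]
  congr 1
  ext e
  constructor
  · rintro ⟨he, a, ha, b, hb, rfl⟩
    exact ⟨(a, b), ⟨ha, hb, he⟩, rfl⟩
  · rintro ⟨⟨a, b⟩, ⟨ha, hb, hab⟩, rfl⟩
    exact mk_mem_cutEdges hab ha hb

lemma ncard_closedNbhd [Finite V] (G : SimpleGraph V) (v : V) :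
    (closedNbhd G v).ncard = (G.neighborSet v).ncard + 1 :=
  ncard_insert_of_notMem G.notMem_neighborSet_self

lemma closedNbhd_mono (h : H ≤ G) (v : V) : closedNbhd H v ⊆ closedNbhd G v :=
  insert_subset_insert fun _ hb => h hb

lemma mem_of_mem_map_val {S : Set V} {e : Sym2 S} {a : V} (h : a ∈ e.map Subtype.val) :
    a ∈ S := by
  obtain ⟨b, -, rfl⟩ := Sym2.mem_map.1 h
  exact b.2

lemma preimage_map_val_cutEdges_compl (G : SimpleGraph V) (U : Set V) :
    Sym2.map (Subtype.val : ↥Uᶜ → V) ⁻¹' cutEdges G U = ∅ := by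
  refine eq_empty_of_forall_notMem fun e he => ?_
  obtain ⟨a, ha, haU⟩ := exists_mem_of_mem_cutEdges he
  exact mem_of_mem_map_val ha haU

lemma induce_deleteEdges (G : SimpleGraph V) (E : Set (Sym2 V)) (S : Set V) :
    (G.deleteEdges E).induce S = (G.induce S).deleteEdges (Sym2.map Subtype.val ⁻¹' E) := by
  ext a b
  simp

lemma cut_le_cut_of_isClique [Finite V] {N C : Set V} (hN : G.IsClique N) (hC : C.Nonempty)
    (hCN : C ⊆ N) (hcut : cut G N < N.ncard) : cut G N ≤ cut G C := by
  set P : Set V → Set (V × V) := fun U => {p | p.1 ∈ U ∧ p.2 ∉ U ∧ G.Adj p.1 p.2}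
  set A := P N ∩ Prod.fst ⁻¹' C
  set B := P N \ Prod.fst ⁻¹' C
  have hN_eq : cut G N = A.ncard + B.ncard := by
    rw [cut_eq_ncard_adj, ncard_inter_add_ncard_sdiff_eq_ncard]
  have hC_ge : A.ncard + C.ncard * (N \ C).ncard ≤ cut G C := by
    have hdisj : Disjoint A (C ×ˢ (N \ C)) :=
      disjoint_left.2 fun p hA hQ => hA.1.2.1 (hQ.2.1)
    have hsub : A ∪ C ×ˢ (N \ C) ⊆ P C := by
      rintro p (⟨⟨-, hp₂, hadj⟩, hp₁⟩ | ⟨hp₁, hp₂, hp₂C⟩)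
      · exact ⟨hp₁, fun h => hp₂ (hCN h), hadj⟩
      · exact ⟨hp₁, hp₂C, hN (hCN hp₁) hp₂ fun h => hp₂C (h ▸ hp₁)⟩
    rw [← ncard_prod, ← ncard_union_eq hdisj, cut_eq_ncard_adj]
    exact ncard_le_ncard hsub
  have hB_zero : (N \ C).ncard = 0 → B.ncard = 0 := by
    intro h
    rw [ncard_eq_zero, sdiff_eq_empty] at h
    rw [ncard_eq_zero, eq_empty_iff_forall_notMem]
    exact fun p hp => hp.2 (h hp.1.1)
  have hN_card : N.ncard = (N \ C).ncard + C.ncard := (ncard_sdiff_add_ncard_of_subset hCN).symm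
  have hC_pos : 0 < C.ncard := (ncard_pos).2 hC
  rcases Nat.eq_zero_or_pos (N \ C).ncard with hD | hD
  · have := hB_zero hD
    omega
  · nlinarith

lemma IsClusterGraph.induce (hH : IsClusterGraph H) (S : Set V) : IsClusterGraph (H.induce S) :=
  fun _ _ _ h₁ h₂ hne => hH h₁ h₂ (Subtype.coe_injective.ne hne)

lemma SimpleGraph.IsClique.isClusterGraph_induce {U : Set V} (hU : H.IsClique U) :
    IsClusterGraph (H.induce U) :=
  fun u _ x _ _ hne => hU u.2 x.2 (Subtype.coe_injective.ne hne)

lemma IsClusterGraph.of_induce {U : Set V} (hcross : ∀ ⦃a b⦄, H.Adj a b → a ∈ U → b ∈ U)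
    (hU : IsClusterGraph (H.induce U)) (hUc : IsClusterGraph (H.induce Uᶜ)) :
    IsClusterGraph H := by
  intro u w x huw hwx hux
  by_cases hu : u ∈ U
  · have hw := hcross huw hu
    have hx := hcross hwx hw
    exact hU (u := ⟨u, hu⟩) (v := ⟨w, hw⟩) (w := ⟨x, hx⟩) huw hwx (by simpa using hux)
  · have hw : w ∉ U := fun hw => hu (hcross huw.symm hw)
    have hx : x ∉ U := fun hx => hw (hcross hwx.symm hx)
    exact hUc (u := ⟨u, hu⟩) (v := ⟨w, hw⟩) (w := ⟨x, hx⟩) huw hwx (by simpa using hux)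

lemma IsClusterGraph.mem_closedNbhd_of_adj (hH : IsClusterGraph H) {v a b : V}
    (ha : a ∈ closedNbhd H v) (hab : H.Adj a b) : b ∈ closedNbhd H v := by
  by_cases hbv : b = v
  · subst hbv
    exact mem_insert b _
  rcases ha with rfl | hva
  · exact mem_insert_of_mem _ hab
  · exact mem_insert_of_mem _ (hH hva hab (Ne.symm hbv))

lemma IsClusterGraph.cutEdges_closedNbhd_subset {E : Set (Sym2 V)}
    (hE : IsClusterGraph (G.deleteEdges E)) (v : V) :
    cutEdges G (closedNbhd (G.deleteEdges E) v) ⊆ E := by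
  rintro _ ⟨hab, a, ha, b, hb, rfl⟩
  by_contra he
  exact hb (hE.mem_closedNbhd_of_adj ha ((deleteEdges_adj ..).2 ⟨hab, he⟩))

lemma exists_ncard_eq_clusterDelNum (G : SimpleGraph V) :
    ∃ E ⊆ G.edgeSet, E.ncard = clusterDelNum G ∧ IsClusterGraph (G.deleteEdges E) := by
  have hne : {n | ∃ E ⊆ G.edgeSet, E.ncard = n ∧ IsClusterGraph (G.deleteEdges E)}.Nonempty :=
    ⟨_, G.edgeSet, subset_rfl, rfl, fun _ _ _ h => by simp at h⟩
  exact Nat.sInf_mem hne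

lemma clusterDelNum_le_ncard [Finite V] {E : Set (Sym2 V)}
    (hE : IsClusterGraph (G.deleteEdges E)) : clusterDelNum G ≤ E.ncard := by
  have hmem : (E ∩ G.edgeSet).ncard ∈
      {n | ∃ F ⊆ G.edgeSet, F.ncard = n ∧ IsClusterGraph (G.deleteEdges F)} :=
    ⟨_, inter_subset_right, rfl, by rwa [← deleteEdges_eq_inter_edgeSet]⟩
  exact (Nat.sInf_le hmem).trans (ncard_le_ncard inter_subset_left)

lemma clusterDelNum_induce_le [Finite V] {E : Set (Sym2 V)}
    (hE : IsClusterGraph (G.deleteEdges E)) (S : Set V) :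
    clusterDelNum (G.induce S) ≤ (Sym2.map (Subtype.val : S → V) ⁻¹' E).ncard :=
  clusterDelNum_le_ncard (by rw [← induce_deleteEdges]; exact hE.induce S)

lemma clusterDelNum_le_induce_compl_add_cut [Finite V] {N : Set V} (hN : G.IsClique N) :
    clusterDelNum G ≤ clusterDelNum (G.induce Nᶜ) + cut G N := by
  obtain ⟨E', -, hE'card, hE'⟩ := exists_ncard_eq_clusterDelNum (G.induce Nᶜ)
  set f : Sym2 ↥Nᶜ → Sym2 V := Sym2.map Subtype.val
  set F := f '' E' ∪ cutEdges G N
  have hF : IsClusterGraph (G.deleteEdges F) := by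
    refine IsClusterGraph.of_induce (U := N) ?_ ?_ ?_
    · intro a b hab ha
      by_contra hb
      exact ((deleteEdges_adj ..).1 hab).2
        (Or.inr (mk_mem_cutEdges ((deleteEdges_adj ..).1 hab).1 ha hb))
    · refine IsClique.isClusterGraph_induce fun a ha b hb hab => (deleteEdges_adj ..).2
        ⟨hN ha hb hab, ?_⟩
      rintro (⟨e, -, he⟩ | hcut)
      · exact absurd ha (mem_of_mem_map_val (he ▸ Sym2.mem_mk_left a b))
      · obtain ⟨c, hc, hcN⟩ := exists_notMem_of_mem_cutEdges hcut
        rcases Sym2.mem_iff.1 hc with rfl | rfl <;> contradiction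
    · rwa [induce_deleteEdges, preimage_union,
        preimage_image_eq _ (Sym2.map.injective Subtype.val_injective),
        preimage_map_val_cutEdges_compl, union_empty]
  calc clusterDelNum G ≤ F.ncard := clusterDelNum_le_ncard hF
    _ ≤ (f '' E').ncard + cut G N := ncard_union_le _ _
    _ ≤ clusterDelNum (G.induce Nᶜ) + cut G N := by
      rw [← hE'card]; exact Nat.add_le_add_right (ncard_image_le (toFinite _)) _

lemma clusterDelNum_induce_compl_add_cut_le [Finite V] {v : V} (hN : G.IsClique (closedNbhd G v))
    (hcut : cut G (closedNbhd G v) < (closedNbhd G v).ncard) :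
    clusterDelNum (G.induce (closedNbhd G v)ᶜ) + cut G (closedNbhd G v) ≤ clusterDelNum G := by
  set N := closedNbhd G v
  obtain ⟨E, -, hEcard, hE⟩ := exists_ncard_eq_clusterDelNum G
  set f : Sym2 ↥Nᶜ → Sym2 V := Sym2.map Subtype.val
  set C := closedNbhd (G.deleteEdges E) v
  have hCN : C ⊆ N := closedNbhd_mono (G.deleteEdges_le E) v
  have hdisj : Disjoint (f '' (f ⁻¹' E)) (cutEdges G C) := by
    refine disjoint_left.2 ?_
    rintro _ ⟨e, -, rfl⟩ he
    obtain ⟨a, ha, haC⟩ := exists_mem_of_mem_cutEdges he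
    exact absurd (hCN haC) (mem_of_mem_map_val ha)
  calc clusterDelNum (G.induce Nᶜ) + cut G N ≤ (f ⁻¹' E).ncard + cut G C :=
        Nat.add_le_add (clusterDelNum_induce_le hE _)
          (cut_le_cut_of_isClique hN ⟨v, mem_insert v _⟩ hCN hcut)
    _ = (f '' (f ⁻¹' E) ∪ cutEdges G C).ncard := by
      rw [ncard_union_eq hdisj,
        ncard_image_of_injective _ (Sym2.map.injective Subtype.val_injective),
        cut_eq_ncard_cutEdges]
    _ ≤ E.ncard :=
      ncard_le_ncard (union_subset (image_preimage_subset _ _) (hE.cutEdges_closedNbhd_subset v))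
    _ = clusterDelNum G := hEcard

end

theorem stmt1 {V : Type*} [Fintype V] (G : SimpleGraph V) (v : V)
    (hsimp : G.IsClique (closedNbhd G v))
    (hd : cut G (closedNbhd G v) ≤ cut G {v}) :
    clusterDelNum G = clusterDelNum (G.induce (closedNbhd G v)ᶜ) + cut G (closedNbhd G v) := by
  have hcut : cut G (closedNbhd G v) < (closedNbhd G v).ncard := by
    rw [ncard_closedNbhd, ← cut_singleton]
    omega
  exact le_antisymm (clusterDelNum_le_induce_compl_add_cut hsimp)
    (clusterDelNum_induce_compl_add_cut_le hsimp hcut)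
end

section
/- Let G be a simple graph with a minimum cluster edge deletion set E₋ of size at most k, and suppose no simplicial vertex v of G satisfies d(N[v]) ≤ d(v). Then |V(G)| ≤ 2k. -/
open scoped Classical

/-!
Let `G' = G - E`, a cluster graph whose clusters are the closed neighbourhoods `N'[x]`, and let
`deg_E v` count the edges of `E` at `v`. Each cluster `C` satisfies `|C| ≤ ∑_{v ∈ C} deg_E v`:
either every vertex of `C` meets `E`, or `C = N[u]` for a vertex `u` untouched by `E`; then `C`
is a clique of `G`, every edge of `G` leaving `C` lies in `E`, and the hypothesis gives
`|C| = d(u) + 1 ≤ d(N[u]) ≤ ∑_{v ∈ C} deg_E v`. Summing over the clusters,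
`|V| ≤ ∑_v deg_E v = 2|E|`.
-/

open Finset SimpleGraph

theorem Fintype.card_le_sum_of_forall_fiber {ι κ : Type*} [Fintype ι] [DecidableEq κ]
    (g : ι → κ) (f : ι → ℕ) (h : ∀ i, #{j | g j = g i} ≤ ∑ j with g j = g i, f j) :
    Fintype.card ι ≤ ∑ i, f i := by
  have hmaps : ((univ : Finset ι) : Set ι).MapsTo g (univ.image g) :=
    fun i _ => mem_image_of_mem g (mem_univ i)
  rw [← card_univ, card_eq_sum_card_fiberwise hmaps, ← sum_fiberwise_of_maps_to hmaps]
  refine sum_le_sum fun b hb => ?_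
  obtain ⟨i, -, rfl⟩ := mem_image.mp hb
  exact h i

section closedNbhd

variable {W : Type*} {H : SimpleGraph W} {x y z : W}

theorem mem_closedNbhd_iff : y ∈ closedNbhd H x ↔ x = y ∨ H.Adj x y := by
  simp only [closedNbhd, Set.mem_insert_iff, mem_neighborSet, eq_comm]

theorem mem_closedNbhd_comm : y ∈ closedNbhd H x ↔ x ∈ closedNbhd H y := by
  simp only [mem_closedNbhd_iff, eq_comm, H.adj_comm]

theorem ncard_closedNbhd_s2 [Fintype W] [DecidableRel H.Adj] (x : W) :
    (closedNbhd H x).ncard = H.degree x + 1 := by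
  rw [closedNbhd, Set.ncard_insert_of_notMem (by simp), ← card_neighborSet_eq_degree,
    Set.ncard_eq_toFinset_card', Set.toFinset_card]

theorem IsClusterGraph.mem_closedNbhd_trans (hH : IsClusterGraph H)
    (hy : y ∈ closedNbhd H x) (hz : z ∈ closedNbhd H y) : z ∈ closedNbhd H x := by
  rw [mem_closedNbhd_iff] at *
  rcases hy with rfl | hxy
  · exact hz
  rcases hz with rfl | hyz
  · exact .inr hxy
  by_cases hxz : x = z
  exacts [.inl hxz, .inr (hH hxy hyz hxz)]

theorem IsClusterGraph.closedNbhd_eq_iff (hH : IsClusterGraph H) :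
    closedNbhd H y = closedNbhd H x ↔ y ∈ closedNbhd H x := by
  refine ⟨fun h => h ▸ Set.mem_insert y _, fun hy =>
    Set.ext fun z => ⟨fun hz => ?_, fun hz => ?_⟩⟩
  exacts [hH.mem_closedNbhd_trans hy hz, hH.mem_closedNbhd_trans (mem_closedNbhd_comm.mp hy) hz]

theorem IsClusterGraph.isClique_closedNbhd (hH : IsClusterGraph H) (x : W) :
    H.IsClique (closedNbhd H x) := by
  intro a ha b hb hab
  obtain rfl | h := mem_closedNbhd_iff.mp (hH.mem_closedNbhd_trans (mem_closedNbhd_comm.mp ha) hb)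
  exacts [absurd rfl hab, h]

theorem IsClusterGraph.mem_closedNbhd_of_adj_s2 (hH : IsClusterGraph H)
    (hy : y ∈ closedNbhd H x) (hyz : H.Adj y z) : z ∈ closedNbhd H x :=
  hH.mem_closedNbhd_trans hy (mem_closedNbhd_iff.mpr (.inr hyz))

theorem IsClusterGraph.filter_closedNbhd_eq [Fintype W] (hH : IsClusterGraph H) (x : W) :
    ({y | closedNbhd H y = closedNbhd H x} : Finset W) = (closedNbhd H x).toFinset := by
  ext y
  simp only [mem_filter, mem_univ, true_and, Set.mem_toFinset, hH.closedNbhd_eq_iff]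

end closedNbhd

section cut

variable {V : Type*} {G H : SimpleGraph V} {U : Set V}

theorem cut_singleton_s2 [Fintype V] [DecidableRel G.Adj] (v : V) : cut G {v} = G.degree v := by
  have hset : {e ∈ G.edgeSet | ∃ a ∈ ({v} : Set V), ∃ b ∉ ({v} : Set V), e = s(a, b)} =
      G.incidenceSet v := by
    ext e
    induction e using Sym2.ind with
    | _ a b =>
      simp only [Set.mem_sep_iff, mem_edgeSet, Set.mem_singleton_iff, mk'_mem_incidenceSet_iff]
      refine and_congr_right fun hab => ?_
      simp only [exists_eq_left, Sym2.eq_iff]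
      constructor
      · rintro ⟨c, -, ⟨rfl, -⟩ | ⟨-, rfl⟩⟩
        exacts [.inl rfl, .inr rfl]
      · rintro (rfl | rfl)
        exacts [⟨b, hab.ne', .inl ⟨rfl, rfl⟩⟩, ⟨a, hab.ne, .inr ⟨rfl, rfl⟩⟩]
  rw [cut, hset, ← card_incidenceSet_eq_degree, ← Nat.card_eq_fintype_card, Nat.card_coe_set_eq]

theorem cut_le_cut_of_adj [Finite V] (h : ∀ a ∈ U, ∀ b ∉ U, G.Adj a b → H.Adj a b) :
    cut G U ≤ cut H U := by
  refine Set.ncard_le_ncard ?_ (Set.toFinite _)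
  rintro _ ⟨he, a, ha, b, hb, rfl⟩
  exact ⟨h a ha b hb he, a, ha, b, hb, rfl⟩

theorem cut_le_sum_degree [Fintype V] [DecidableRel H.Adj] (U : Set V) :
    cut H U ≤ ∑ v ∈ U.toFinset, H.degree v := by
  calc cut H U ≤ (↑(U.toFinset.biUnion fun v => H.incidenceFinset v) : Set (Sym2 V)).ncard := by
        refine Set.ncard_le_ncard ?_ (Set.toFinite _)
        rintro _ ⟨he, a, ha, b, -, rfl⟩
        simp only [coe_biUnion, Set.coe_toFinset, Set.mem_iUnion, coe_incidenceFinset]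
        exact ⟨a, ha, he, Sym2.mem_mk_left a b⟩
    _ ≤ ∑ v ∈ U.toFinset, #(H.incidenceFinset v) := by
        rw [Set.ncard_coe_finset]; exact card_biUnion_le
    _ = ∑ v ∈ U.toFinset, H.degree v := by simp only [card_incidenceFinset_eq_degree]

end cut

section clusterDeletion

variable {V : Type*} {G : SimpleGraph V} {E : Set (Sym2 V)}

theorem closedNbhd_deleteEdges_of_forall_not_adj {u : V}
    (hu : ∀ w, ¬(fromEdgeSet E).Adj u w) :
    closedNbhd (G.deleteEdges E) u = closedNbhd G u := by
  ext w
  simp only [mem_closedNbhd_iff, deleteEdges_adj]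
  exact or_congr_right
    ⟨And.left, fun h => ⟨h, fun hE => hu w ((fromEdgeSet_adj E).mpr ⟨hE, h.ne⟩)⟩⟩

theorem fromEdgeSet_adj_of_mem_closedNbhd_of_notMem (hcl : IsClusterGraph (G.deleteEdges E))
    {x a b : V} (ha : a ∈ closedNbhd (G.deleteEdges E) x)
    (hb : b ∉ closedNbhd (G.deleteEdges E) x) (hab : G.Adj a b) :
    (fromEdgeSet E).Adj a b :=
  (fromEdgeSet_adj E).mpr ⟨by_contra fun he =>
    hb (hcl.mem_closedNbhd_of_adj_s2 ha (deleteEdges_adj.mpr ⟨hab, he⟩)), hab.ne⟩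

theorem sum_degree_fromEdgeSet [Fintype V] [DecidableRel (fromEdgeSet E).Adj]
    (hE : E ⊆ G.edgeSet) : ∑ v, (fromEdgeSet E).degree v = 2 * E.ncard := by
  rw [sum_degrees_eq_twice_card_edges, ← Set.ncard_coe_finset, coe_edgeFinset,
    edgeSet_fromEdgeSet, sdiff_eq_left.mpr]
  exact Set.disjoint_left.mpr fun e he hd => G.not_isDiag_of_mem_edgeSet (hE he) hd

theorem card_toFinset_closedNbhd_le_sum_degree [Fintype V]
    (hcl : IsClusterGraph (G.deleteEdges E))
    (hsimp : ∀ v, G.IsClique (closedNbhd G v) → cut G {v} < cut G (closedNbhd G v)) (x : V) :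
    #(closedNbhd (G.deleteEdges E) x).toFinset ≤
      ∑ v ∈ (closedNbhd (G.deleteEdges E) x).toFinset, (fromEdgeSet E).degree v := by
  set C := closedNbhd (G.deleteEdges E) x
  by_cases hfree : ∃ u ∈ C, (fromEdgeSet E).degree u = 0
  · obtain ⟨u, huC, hu⟩ := hfree
    have hCu : C = closedNbhd G u := by
      have hCu' : closedNbhd (G.deleteEdges E) u = C := hcl.closedNbhd_eq_iff.mpr huC
      rw [← hCu', closedNbhd_deleteEdges_of_forall_not_adj]
      exact fun w hw => ((degree_pos_iff_exists_adj _ u).mpr ⟨w, hw⟩).ne' hu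
    have hclique : G.IsClique (closedNbhd G u) :=
      hCu ▸ (hcl.isClique_closedNbhd x).mono (deleteEdges_le E)
    calc #C.toFinset = cut G {u} + 1 := by
          rw [← Set.ncard_eq_toFinset_card', hCu, ncard_closedNbhd_s2, cut_singleton_s2]
      _ ≤ cut G C := hCu ▸ hsimp u hclique
      _ ≤ cut (fromEdgeSet E) C := cut_le_cut_of_adj fun a ha b hb =>
          fromEdgeSet_adj_of_mem_closedNbhd_of_notMem hcl ha hb
      _ ≤ _ := cut_le_sum_degree C
  · push Not at hfree
    rw [card_eq_sum_ones]
    exact sum_le_sum fun v hv => Nat.one_le_iff_ne_zero.mpr (hfree v (Set.mem_toFinset.mp hv))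

end clusterDeletion

theorem stmt2_general {V : Type*} [Fintype V] (G : SimpleGraph V) (k : ℕ) (E : Set (Sym2 V))
    (hE : E ⊆ G.edgeSet) (hcluster : IsClusterGraph (G.deleteEdges E))
    (hk : E.ncard ≤ k)
    (hnosimp : ¬∃ v : V, G.IsClique (closedNbhd G v) ∧ cut G (closedNbhd G v) ≤ cut G {v}) :
    Fintype.card V ≤ 2 * k := by
  push Not at hnosimp
  calc Fintype.card V ≤ ∑ v, (fromEdgeSet E).degree v :=
        Fintype.card_le_sum_of_forall_fiber (closedNbhd (G.deleteEdges E)) _ fun x => by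
          simpa only [hcluster.filter_closedNbhd_eq] using
            card_toFinset_closedNbhd_le_sum_degree hcluster hnosimp x
    _ = 2 * E.ncard := sum_degree_fromEdgeSet hE
    _ ≤ 2 * k := Nat.mul_le_mul_left 2 hk

theorem stmt2 {V : Type*} [Fintype V] (G : SimpleGraph V) (k : ℕ) (E : Set (Sym2 V))
    (hE : E ⊆ G.edgeSet) (hcluster : IsClusterGraph (G.deleteEdges E))
    (hmin : ∀ E' ⊆ G.edgeSet, IsClusterGraph (G.deleteEdges E') → E.ncard ≤ E'.ncard)
    (hk : E.ncard ≤ k)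
    (hnosimp : ¬∃ v : V, G.IsClique (closedNbhd G v) ∧ cut G (closedNbhd G v) ≤ cut G {v}) :
    Fintype.card V ≤ 2 * k :=
  stmt2_general G k E hE hcluster hk hnosimp
end

section
/- Let G be a simple graph, E₋ ⊆ E(G) a minimal strong triadic closure solution (i.e., every induced P₃ of G − E₋ has its two vertices at distance two adjacent in G), and let v be a simplicial vertex. Let X be the set of vertices x with N[x] = N[v], and let Y ⊆ N[v] be the set of endpoints in N[v] of edges between N[v] and V(G)∖N[v] not in E₋. Then every edge of G between X and Y belongs to E₋. -/
open scoped Classical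

theorem IsSTCSolution.adj_of_deleteEdges_adj {W : Type*} {G : SimpleGraph W} {E : Set (Sym2 W)}
    (hsol : IsSTCSolution G E) {u w x : W} (huw : (G.deleteEdges E).Adj u w)
    (hwx : (G.deleteEdges E).Adj w x) (hux : u ≠ x) : G.Adj u x := by
  by_cases h : (G.deleteEdges E).Adj u x
  · exact h.1
  · exact hsol.2 huw hwx hux h

theorem stmt4_general {V : Type*} (G : SimpleGraph V) (E : Set (Sym2 V)) (v : V)
    (hsol : IsSTCSolution G E)
    (X Y : Set V)
    (hX : X = {x | closedNbhd G x = closedNbhd G v})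
    (hY : Y = {y ∈ closedNbhd G v | ∃ z ∉ closedNbhd G v, G.Adj y z ∧ s(y, z) ∉ E}) :
    ∀ x ∈ X, ∀ y ∈ Y, G.Adj x y → s(x, y) ∈ E := by
  subst hX hY
  rintro x hx y ⟨-, z, hz, hyz, hyzE⟩ hxy
  rw [← (hx : closedNbhd G x = closedNbhd G v)] at hz
  by_contra hxyE
  have hxz : x ≠ z := fun h => hz (h ▸ Set.mem_insert x _)
  have hxy' : (G.deleteEdges E).Adj x y := SimpleGraph.deleteEdges_adj.2 ⟨hxy, hxyE⟩
  have hyz' : (G.deleteEdges E).Adj y z := SimpleGraph.deleteEdges_adj.2 ⟨hyz, hyzE⟩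
  exact hz (Set.mem_insert_of_mem x (hsol.adj_of_deleteEdges_adj hxy' hyz' hxz))

theorem stmt4 {V : Type*} (G : SimpleGraph V) (E : Set (Sym2 V)) (v : V)
    (hsol : IsSTCSolution G E)
    (hmin : ∀ E' : Set (Sym2 V), IsSTCSolution G E' → E' ⊆ E → E' = E)
    (hsimp : G.IsClique (closedNbhd G v))
    (X Y : Set V)
    (hX : X = {x | closedNbhd G x = closedNbhd G v})
    (hY : Y = {y ∈ closedNbhd G v | ∃ z ∉ closedNbhd G v, G.Adj y z ∧ s(y, z) ∉ E}) :
    ∀ x ∈ X, ∀ y ∈ Y, G.Adj x y → s(x, y) ∈ E :=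
  stmt4_general G E v hsol X Y hX hY
end

section
/- A finite simple graph H is trivially perfect (i.e., has no induced P₄ and no induced C₄) if and only if every nonempty connected induced subgraph of H contains a universal vertex (a vertex adjacent to all other vertices of that subgraph). -/
/-!
If `u - x - w` is an induced path in a trivially perfect graph, every neighbour of `u` other than
`x` is adjacent to `x` (otherwise it would extend the path to an induced `P₄` or `C₄`), so
`deg u < deg x`. In a connected graph, a path from a vertex `u` of maximum degree to a
non-neighbour must leave the closed neighbourhood of `u` through such an induced path, so `u` is
universal. Conversely, an induced `P₄` or `C₄` is itself a connected induced subgraph in which every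
vertex has a non-neighbour.
-/

open scoped Classical

open SimpleGraph

section

variable {W W' : Type*} {G : SimpleGraph W} {H : SimpleGraph W'}

def HasUniversalVertex (G : SimpleGraph W) : Prop :=
  ∃ u, ∀ w, w ≠ u → G.Adj u w

lemma P4At.map (f : G ↪g H) {a b c d : W} (h : P4At G a b c d) :
    P4At H (f a) (f b) (f c) (f d) := by
  simpa only [P4At, f.map_adj_iff, f.injective.ne_iff] using h

lemma C4At.map (f : G ↪g H) {a b c d : W} (h : C4At G a b c d) :
    C4At H (f a) (f b) (f c) (f d) := by
  simpa only [C4At, f.map_adj_iff, f.injective.ne_iff] using h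

lemma IsTriviallyPerfect.comap (f : G ↪g H) (hH : IsTriviallyPerfect H) :
    IsTriviallyPerfect G :=
  ⟨fun ⟨_, _, _, _, h⟩ => hH.1 ⟨_, _, _, _, h.map f⟩,
    fun ⟨_, _, _, _, h⟩ => hH.2 ⟨_, _, _, _, h.map f⟩⟩

lemma IsTriviallyPerfect.adj_of_adj_of_not_adj (hG : IsTriviallyPerfect G) {u x w y : W}
    (hux : G.Adj u x) (hxw : G.Adj x w) (huw : ¬G.Adj u w) (huw' : u ≠ w)
    (huy : G.Adj u y) (hyx : y ≠ x) : G.Adj x y := by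
  by_contra hxy
  have hyw : y ≠ w := by rintro rfl; exact huw huy
  by_cases hwy : G.Adj w y
  · exact hG.2 ⟨y, u, x, w, huy.ne.symm, hyx, hyw, hux.ne, huw', hxw.ne,
      huy.symm, hux, hxw, hwy, fun h => hxy h.symm, huw⟩
  · exact hG.1 ⟨y, u, x, w, huy.ne.symm, hyx, hyw, hux.ne, huw', hxw.ne,
      huy.symm, hux, hxw, fun h => hxy h.symm, huw, fun h => hwy h.symm⟩

lemma IsTriviallyPerfect.degree_lt [Fintype W] (hG : IsTriviallyPerfect G) {u x w : W}
    (hux : G.Adj u x) (hxw : G.Adj x w) (huw : ¬G.Adj u w) (huw' : u ≠ w) :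
    G.degree u < G.degree x := by
  have hsub : (G.neighborFinset u).erase x ⊆ ((G.neighborFinset x).erase u).erase w := by
    intro y hy
    rw [Finset.mem_erase, mem_neighborFinset] at hy
    have hyw : y ≠ w := by rintro rfl; exact huw hy.2
    simpa [hyw, hy.2.ne.symm] using hG.adj_of_adj_of_not_adj hux hxw huw huw' hy.2 hy.1
  have hw : w ∈ (G.neighborFinset x).erase u := by simpa [huw'.symm] using hxw
  have hu : u ∈ G.neighborFinset x := by simpa using hux.symm
  have hx : x ∈ G.neighborFinset u := by simpa using hux
  calc G.degree u = ((G.neighborFinset u).erase x).card + 1 := by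
        rw [Finset.card_erase_add_one hx, card_neighborFinset_eq_degree]
    _ ≤ (((G.neighborFinset x).erase u).erase w).card + 1 :=
        Nat.add_le_add_right (Finset.card_le_card hsub) 1
    _ < (((G.neighborFinset x).erase u).erase w).card + 1 + 1 := Nat.lt_succ_self _
    _ = G.degree x := by
        rw [Finset.card_erase_add_one hw, Finset.card_erase_add_one hu,
          card_neighborFinset_eq_degree]

lemma IsTriviallyPerfect.hasUniversalVertex [Finite W] (hG : IsTriviallyPerfect G)
    (hc : G.Connected) : HasUniversalVertex G := by
  have := Fintype.ofFinite W
  have := hc.nonempty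
  obtain ⟨u, hu⟩ := Finite.exists_max fun v => G.degree v
  refine ⟨u, fun w hwu => ?_⟩
  by_contra huw
  obtain ⟨p⟩ := hc.preconnected u w
  obtain ⟨d, -, hd, hd'⟩ := p.exists_boundary_dart (insert u (G.neighborSet u))
    (Set.mem_insert u _) (by simpa [hwu] using huw)
  simp only [Set.mem_insert_iff, mem_neighborSet, not_or] at hd hd'
  have hux : G.Adj u d.fst := hd.resolve_left fun h => hd'.2 (h ▸ d.adj)
  exact (hu d.fst).not_gt (hG.degree_lt hux d.adj hd'.2 (Ne.symm hd'.1))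

lemma not_hasUniversalVertex_induce {s : Set W} (h : ∀ u ∈ s, ∃ w ∈ s, w ≠ u ∧ ¬G.Adj u w) :
    ¬HasUniversalVertex (G.induce s) := by
  rintro ⟨u, hu⟩
  obtain ⟨w, hw, hwu, huw⟩ := h u u.2
  exact huw (hu ⟨w, hw⟩ (Subtype.coe_ne_coe.1 hwu))

lemma exists_connected_induce_not_hasUniversalVertex {a b c d : W}
    (hab : G.Adj a b) (hbc : G.Adj b c) (hcd : G.Adj c d) (hac : ¬G.Adj a c) (hbd : ¬G.Adj b d)
    (hac' : a ≠ c) (hbd' : b ≠ d) :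
    ∃ s : Set W, (G.induce s).Connected ∧ ¬HasUniversalVertex (G.induce s) := by
  let p : G.Walk a d := .cons hab (.cons hbc (.cons hcd .nil))
  refine ⟨_, p.connected_induce_support, not_hasUniversalVertex_induce fun u hu => ?_⟩
  simp only [p, Walk.support_cons, Walk.support_nil, Set.mem_ofPred_eq, List.mem_cons,
    List.not_mem_nil, or_false] at hu ⊢
  rcases hu with rfl | rfl | rfl | rfl
  · exact ⟨c, by simp, hac'.symm, hac⟩
  · exact ⟨d, by simp, hbd'.symm, hbd⟩
  · exact ⟨a, by simp, hac', fun h => hac h.symm⟩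
  · exact ⟨b, by simp, hbd', fun h => hbd h.symm⟩

lemma isTriviallyPerfect_of_forall_connected_induce
    (h : ∀ s : Set W, (G.induce s).Connected → HasUniversalVertex (G.induce s)) :
    IsTriviallyPerfect G := by
  have hpath : ∀ ⦃a b c d : W⦄, G.Adj a b → G.Adj b c → G.Adj c d → ¬G.Adj a c →
      ¬G.Adj b d → a ≠ c → b ≠ d → False := fun a b c d hab hbc hcd hac hbd hac' hbd' => by
    obtain ⟨s, hs, hno⟩ :=
      exists_connected_induce_not_hasUniversalVertex hab hbc hcd hac hbd hac' hbd'
    exact hno (h s hs)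
  exact ⟨fun ⟨_, _, _, _, _, hac', _, _, hbd', _, hab, hbc, hcd, hac, hbd, _⟩ =>
      hpath hab hbc hcd hac hbd hac' hbd',
    fun ⟨_, _, _, _, _, hac', _, _, hbd', _, hab, hbc, hcd, _, hac, hbd⟩ =>
      hpath hab hbc hcd hac hbd hac' hbd'⟩

end

theorem stmt6 {V : Type*} [Fintype V] (H : SimpleGraph V) :
    IsTriviallyPerfect H ↔
      ∀ s : Set V, s.Nonempty → (H.induce s).Connected →
        ∃ u : s, ∀ w : s, w ≠ u → (H.induce s).Adj u w :=
  ⟨fun hH s _ hs => (hH.comap (Embedding.induce s)).hasUniversalVertex hs,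
    fun hUniv => isTriviallyPerfect_of_forall_connected_induce fun s hs =>
      hUniv s (Set.nonempty_coe_sort.1 hs.nonempty) hs⟩
end

section
/- If u and v are true twins in a simple graph G (N_G[u] = N_G[v]), then u and v remain true twins in every minimal trivially perfect completion of G. -/
open scoped Classical

/-!
Let `u, v` be true twins of `G` and `Gh` a minimal trivially perfect completion. In a trivially
perfect graph adjacent vertices have nested closed neighbourhoods, so intersecting `Gh` with its
image under the transposition `(u v)` only shrinks the larger of the two neighbourhoods to the
smaller one: the result is `Gh` with `u, v` made true twins. Since no `P₄` or `C₄` contains a pair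
of true twins, and swapping `u, v` is now an automorphism, every `P₄`/`C₄` of the intersection can
be moved off one of the twins and then lies in `Gh`; so the intersection is trivially perfect. It
lies between `G` and `Gh`, hence equals `Gh` by minimality, i.e. `Gh` is invariant under `(u v)`.
-/

section

variable {V W : Type*}

lemma mem_closedNbhd {G : SimpleGraph V} {u x : V} : x ∈ closedNbhd G u ↔ x = u ∨ G.Adj u x :=
  Iff.rfl

lemma closedNbhd_eq_iff {G : SimpleGraph V} {u v : V} :
    closedNbhd G u = closedNbhd G v ↔ (u = v ∨ G.Adj u v) ∧ G ≤ G.comap (Equiv.swap u v) := by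
  simp only [Set.ext_iff, mem_closedNbhd]
  constructor
  · intro h
    refine ⟨by grind [G.adj_symm], fun x y hxy => ?_⟩
    simp only [SimpleGraph.comap_adj, Equiv.swap_apply_def]
    split_ifs <;> grind [G.adj_symm, G.ne_of_adj]
  · rintro ⟨huv, hswap⟩ x
    have hux := @hswap u x
    have hvx := @hswap v x
    simp only [SimpleGraph.comap_adj, Equiv.swap_apply_left, Equiv.swap_apply_right] at hux hvx
    grind [G.adj_symm, G.ne_of_adj]

lemma P4At.map_s9 {H : SimpleGraph V} {K : SimpleGraph W} {f : V → W} {a b c d : V}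
    (hf : Set.InjOn f {a, b, c, d})
    (hadj : ∀ x ∈ ({a, b, c, d} : Set V), ∀ y ∈ ({a, b, c, d} : Set V),
      (K.Adj (f x) (f y) ↔ H.Adj x y))
    (h : P4At H a b c d) : P4At K (f a) (f b) (f c) (f d) := by
  simp only [Set.InjOn, Set.mem_insert_iff, Set.mem_singleton_iff] at hf hadj
  unfold P4At at *
  grind

lemma C4At.map_s9 {H : SimpleGraph V} {K : SimpleGraph W} {f : V → W} {a b c d : V}
    (hf : Set.InjOn f {a, b, c, d})
    (hadj : ∀ x ∈ ({a, b, c, d} : Set V), ∀ y ∈ ({a, b, c, d} : Set V),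
      (K.Adj (f x) (f y) ↔ H.Adj x y))
    (h : C4At H a b c d) : C4At K (f a) (f b) (f c) (f d) := by
  simp only [Set.InjOn, Set.mem_insert_iff, Set.mem_singleton_iff] at hf hadj
  unfold C4At at *
  grind

lemma P4At.closedNbhd_ne {H : SimpleGraph V} {a b c d u v : V} (h : P4At H a b c d)
    (hu : u ∈ ({a, b, c, d} : Set V)) (hv : v ∈ ({a, b, c, d} : Set V)) (huv : u ≠ v) :
    closedNbhd H u ≠ closedNbhd H v := by
  simp only [Set.mem_insert_iff, Set.mem_singleton_iff] at hu hv
  simp only [ne_eq, Set.ext_iff, mem_closedNbhd, not_forall]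
  unfold P4At at h
  rcases hu with rfl | rfl | rfl | rfl <;> rcases hv with rfl | rfl | rfl | rfl <;>
    grind [H.adj_symm]

lemma C4At.closedNbhd_ne {H : SimpleGraph V} {a b c d u v : V} (h : C4At H a b c d)
    (hu : u ∈ ({a, b, c, d} : Set V)) (hv : v ∈ ({a, b, c, d} : Set V)) (huv : u ≠ v) :
    closedNbhd H u ≠ closedNbhd H v := by
  simp only [Set.mem_insert_iff, Set.mem_singleton_iff] at hu hv
  simp only [ne_eq, Set.ext_iff, mem_closedNbhd, not_forall]
  unfold C4At at h
  rcases hu with rfl | rfl | rfl | rfl <;> rcases hv with rfl | rfl | rfl | rfl <;>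
    grind [H.adj_symm]

lemma IsTriviallyPerfect.closedNbhd_subset_or_subset {G : SimpleGraph V}
    (hG : IsTriviallyPerfect G) {u v : V} (huv : G.Adj u v) :
    closedNbhd G u ⊆ closedNbhd G v ∨ closedNbhd G v ⊆ closedNbhd G u := by
  by_contra! h
  obtain ⟨⟨x, hxu, hxv⟩, ⟨y, hyv, hyu⟩⟩ := And.imp Set.not_subset.mp Set.not_subset.mp h
  simp only [mem_closedNbhd, not_or] at hxu hxv hyv hyu
  by_cases hxy : G.Adj x y
  · exact hG.2 ⟨x, u, v, y, by grind [C4At, G.adj_symm, G.ne_of_adj]⟩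
  · exact hG.1 ⟨x, u, v, y, by grind [P4At, G.adj_symm, G.ne_of_adj]⟩

lemma isTriviallyPerfect_iff {G : SimpleGraph V} :
    IsTriviallyPerfect G ↔ ∀ a b c d, ¬(P4At G a b c d ∨ C4At G a b c d) := by
  simp only [IsTriviallyPerfect, not_or, not_exists]
  grind

lemma IsTriviallyPerfect.inf_comap_swap {G : SimpleGraph V} (hG : IsTriviallyPerfect G) {u v : V}
    (huv : G.Adj u v) : IsTriviallyPerfect (G ⊓ G.comap (Equiv.swap u v)) := by
  wlog hN : closedNbhd G u ⊆ closedNbhd G v generalizing u v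
  · rw [Equiv.swap_comm]
    exact this huv.symm ((hG.closedNbhd_subset_or_subset huv).resolve_left hN)
  set H := G ⊓ G.comap (Equiv.swap u v)
  have hH_swap (x y : V) : H.Adj (Equiv.swap u v x) (Equiv.swap u v y) ↔ H.Adj x y := by
    simp only [H, SimpleGraph.inf_adj, SimpleGraph.comap_adj, Equiv.swap_apply_self, and_comm]
  have hH_off (x y : V) (hx : x ≠ v) (hy : y ≠ v) : G.Adj x y ↔ H.Adj x y := by
    simp only [mem_closedNbhd, Set.subset_def] at hN
    simp only [H, SimpleGraph.inf_adj, SimpleGraph.comap_adj, Equiv.swap_apply_def]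
    split_ifs <;> grind [G.adj_symm, G.ne_of_adj]
  have hH_twin : closedNbhd H u = closedNbhd H v :=
    closedNbhd_eq_iff.mpr ⟨Or.inr ⟨huv, by simpa using huv.symm⟩, fun x y h => (hH_swap x y).mpr h⟩
  have hH_avoid (a b c d : V) (hv : v ∉ ({a, b, c, d} : Set V)) :
      ¬(P4At H a b c d ∨ C4At H a b c d) := by
    have hadj : ∀ x ∈ ({a, b, c, d} : Set V), ∀ y ∈ ({a, b, c, d} : Set V),
        G.Adj (id x) (id y) ↔ H.Adj x y :=
      fun x hx y hy => hH_off x y (ne_of_mem_of_not_mem hx hv) (ne_of_mem_of_not_mem hy hv)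
    exact fun h => isTriviallyPerfect_iff.mp hG a b c d <|
      h.imp (P4At.map_s9 (Set.injOn_id _) hadj) (C4At.map_s9 (Set.injOn_id _) hadj)
  rw [isTriviallyPerfect_iff]
  intro a b c d h
  by_cases hv : v ∈ ({a, b, c, d} : Set V)
  · by_cases hu : u ∈ ({a, b, c, d} : Set V)
    · exact h.elim (fun h => h.closedNbhd_ne hu hv huv.ne hH_twin)
        (fun h => h.closedNbhd_ne hu hv huv.ne hH_twin)
    · have hswap := (Equiv.swap u v).injective.injOn (s := {a, b, c, d})
      refine hH_avoid _ _ _ _ ?_ <| h.imp (P4At.map_s9 hswap fun x _ y _ => hH_swap x y)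
        (C4At.map_s9 hswap fun x _ y _ => hH_swap x y)
      simp only [Set.mem_insert_iff, Set.mem_singleton_iff] at hu ⊢
      grind
  · exact hH_avoid a b c d hv h

end

theorem stmt9 {V : Type*} (G Gh : SimpleGraph V)
    (hmin : IsMinimalTPCompletion G Gh) (u v : V)
    (htwin : closedNbhd G u = closedNbhd G v) :
    closedNbhd Gh u = closedNbhd Gh v := by
  obtain ⟨⟨hGGh, hTP⟩, hmin⟩ := hmin
  obtain ⟨rfl | huv, hGswap⟩ := closedNbhd_eq_iff.mp htwin
  · rfl
  have hGhuv : Gh.Adj u v := hGGh huv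
  have hG_le : G ≤ Gh ⊓ Gh.comap (Equiv.swap u v) :=
    le_inf hGGh fun _ _ h => hGGh (hGswap h)
  have hGh_eq : Gh ⊓ Gh.comap (Equiv.swap u v) = Gh :=
    hmin _ hG_le inf_le_left (hTP.inf_comap_swap hGhuv)
  exact closedNbhd_eq_iff.mpr ⟨Or.inr hGhuv, (le_inf_iff.mp hGh_eq.ge).2⟩
end

section
/- Every module M of a simple graph G remains a module in any minimal trivially perfect completion of G. -/
open scoped Classical

/-!
Delete from a trivially perfect completion `Gh` every edge between `M` and a vertex outside `M`
that is not adjacent to all of `M`. The resulting graph still contains `G`, because `M` is a module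
of `G`, and `M` is a module of it. It is still trivially perfect: an induced `P₄` or `C₄` in it
meets the module `M` in none, one or all of its vertices, or in two opposite vertices of a `C₄`.
Only the one-vertex case is not already a `P₄` or `C₄` of `Gh`, and there replacing that vertex by
a vertex of `M` missing one of its non-neighbours yields one. Minimality of `Gh` forces equality.
-/

section

variable {W : Type*} {H : SimpleGraph W} {M : Set W} {a b c d : W}

def modularize (H : SimpleGraph W) (M : Set W) : SimpleGraph W where
  Adj u v := H.Adj u v ∧ (u ∈ M → v ∉ M → ∀ m ∈ M, H.Adj m v) ∧
    (v ∈ M → u ∉ M → ∀ m ∈ M, H.Adj m u)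
  symm := ⟨fun _ _ ⟨h, hu, hv⟩ => ⟨h.symm, hv, hu⟩⟩
  loopless := ⟨fun _ h => H.loopless.irrefl _ h.1⟩

theorem modularize_le (H : SimpleGraph W) (M : Set W) : modularize H M ≤ H :=
  fun _ _ h => h.1

theorem modularize_adj_of_iff (h : a ∈ M ↔ b ∈ M) :
    (modularize H M).Adj a b ↔ H.Adj a b :=
  ⟨And.left, fun hab => ⟨hab, fun ha hb => absurd (h.1 ha) hb, fun hb ha => absurd (h.2 hb) ha⟩⟩

theorem modularize_adj_of_mem_of_notMem (ha : a ∈ M) (hb : b ∉ M) :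
    (modularize H M).Adj a b ↔ ∀ m ∈ M, H.Adj m b :=
  ⟨fun h => h.2.1 ha hb, fun h => ⟨h a ha, fun _ _ => h, fun hb' => absurd hb' hb⟩⟩

theorem modularize_adj_of_notMem_of_mem (ha : a ∉ M) (hb : b ∈ M) :
    (modularize H M).Adj a b ↔ ∀ m ∈ M, H.Adj m a := by
  rw [SimpleGraph.adj_comm, modularize_adj_of_mem_of_notMem hb ha]

theorem isModule_modularize (H : SimpleGraph W) (M : Set W) : IsModule (modularize H M) M :=
  fun _ ha _ hb _ hx => by
    rw [modularize_adj_of_mem_of_notMem ha hx, modularize_adj_of_mem_of_notMem hb hx]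

theorem le_modularize {G : SimpleGraph W} (hM : IsModule G M) (hGH : G ≤ H) :
    G ≤ modularize H M :=
  fun u v huv => ⟨hGH huv, fun hu hv m hm => hGH ((hM m hm u hu v hv).2 huv),
    fun hv hu m hm => hGH ((hM m hm v hv u hu).2 huv.symm)⟩

theorem P4At.reverse (h : P4At H a b c d) : P4At H d c b a := by
  obtain ⟨hab, hac, had, hbc, hbd, hcd, Aab, Abc, Acd, Nac, Nbd, Nad⟩ := h
  exact ⟨hcd.symm, hbd.symm, had.symm, hbc.symm, hac.symm, hab.symm, Acd.symm, Abc.symm, Aab.symm,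
    fun h => Nbd h.symm, fun h => Nac h.symm, fun h => Nad h.symm⟩

theorem C4At.rotate (h : C4At H a b c d) : C4At H b c d a := by
  obtain ⟨hab, hac, had, hbc, hbd, hcd, Aab, Abc, Acd, Ada, Nac, Nbd⟩ := h
  exact ⟨hbc, hbd, hab.symm, hcd, hac.symm, had.symm, Abc, Acd, Ada, Aab, Nbd, fun h => Nac h.symm⟩

theorem not_p4At_modularize_of_end_mem (hH : IsTriviallyPerfect H)
    (ha : a ∈ M) (hb : b ∉ M) (hc : c ∉ M) (hd : d ∉ M) : ¬P4At (modularize H M) a b c d := by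
  simp only [P4At, modularize_adj_of_iff, modularize_adj_of_mem_of_notMem, ha, hb, hc, hd,
    not_false_eq_true, iff_self]
  rintro ⟨-, -, -, hbc, hbd, hcd, Aab, Abc, Acd, Nac, Nbd, -⟩
  obtain ⟨m, hm, Nmc⟩ := not_forall₂.1 Nac
  have hmb : m ≠ b := ne_of_mem_of_not_mem hm hb
  have hmc : m ≠ c := ne_of_mem_of_not_mem hm hc
  have hmd : m ≠ d := ne_of_mem_of_not_mem hm hd
  by_cases Amd : H.Adj m d
  · exact hH.2 ⟨m, b, c, d, hmb, hmc, hmd, hbc, hbd, hcd, Aab m hm, Abc, Acd, Amd.symm, Nmc, Nbd⟩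
  · exact hH.1 ⟨m, b, c, d, hmb, hmc, hmd, hbc, hbd, hcd, Aab m hm, Abc, Acd, Nmc, Nbd, Amd⟩

theorem not_p4At_modularize_of_inner_mem (hP4 : ¬∃ a b c d, P4At H a b c d)
    (ha : a ∉ M) (hb : b ∈ M) (hc : c ∉ M) (hd : d ∉ M) : ¬P4At (modularize H M) a b c d := by
  simp only [P4At, modularize_adj_of_iff, modularize_adj_of_mem_of_notMem,
    modularize_adj_of_notMem_of_mem, ha, hb, hc, hd, not_false_eq_true, iff_self]
  rintro ⟨-, hac, had, -, -, hcd, Aab, Abc, Acd, Nac, Nbd, Nad⟩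
  obtain ⟨m, hm, Nmd⟩ := not_forall₂.1 Nbd
  exact hP4 ⟨a, m, c, d, (ne_of_mem_of_not_mem hm ha).symm, hac, had, ne_of_mem_of_not_mem hm hc,
    ne_of_mem_of_not_mem hm hd, hcd, (Aab m hm).symm, Abc m hm, Acd, Nac, Nmd, Nad⟩

theorem not_c4At_modularize_of_one_mem (hC4 : ¬∃ a b c d, C4At H a b c d)
    (ha : a ∈ M) (hb : b ∉ M) (hc : c ∉ M) (hd : d ∉ M) : ¬C4At (modularize H M) a b c d := by
  simp only [C4At, modularize_adj_of_iff, modularize_adj_of_mem_of_notMem,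
    modularize_adj_of_notMem_of_mem, ha, hb, hc, hd, not_false_eq_true, iff_self]
  rintro ⟨-, -, -, hbc, hbd, hcd, Aab, Abc, Acd, Ada, Nac, Nbd⟩
  obtain ⟨m, hm, Nmc⟩ := not_forall₂.1 Nac
  exact hC4 ⟨m, b, c, d, ne_of_mem_of_not_mem hm hb, ne_of_mem_of_not_mem hm hc,
    ne_of_mem_of_not_mem hm hd, hbc, hbd, hcd, Aab m hm, Abc, Acd, (Ada m hm).symm, Nmc, Nbd⟩

theorem not_c4At_modularize_of_opposite_mem (hC4 : ¬∃ a b c d, C4At H a b c d)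
    (ha : a ∈ M) (hb : b ∉ M) (hc : c ∈ M) (hd : d ∉ M) : ¬C4At (modularize H M) a b c d := by
  simp only [C4At, modularize_adj_of_iff, modularize_adj_of_mem_of_notMem,
    modularize_adj_of_notMem_of_mem, ha, hb, hc, hd, not_false_eq_true, iff_self]
  rintro ⟨hab, hac, had, hbc, hbd, hcd, Aab, Abc, Acd, Ada, Nac, Nbd⟩
  exact hC4 ⟨a, b, c, d, hab, hac, had, hbc, hbd, hcd, Aab a ha, (Abc c hc).symm, Acd c hc,
    (Ada a ha).symm, Nac, Nbd⟩

theorem not_exists_p4At_modularize (hH : IsTriviallyPerfect H) :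
    ¬∃ a b c d, P4At (modularize H M) a b c d := by
  rintro ⟨a, b, c, d, hp⟩
  by_cases ha : a ∈ M <;> by_cases hb : b ∈ M <;> by_cases hc : c ∈ M <;> by_cases hd : d ∈ M
  -- In every pattern not listed, unfolding `hp` asserts and denies that some vertex outside `M`
  -- is adjacent to all of `M`.
  all_goals first
    | exact not_p4At_modularize_of_end_mem hH ha hb hc hd hp
    | exact not_p4At_modularize_of_end_mem hH hd hc hb ha hp.reverse
    | exact not_p4At_modularize_of_inner_mem hH.1 ha hb hc hd hp
    | exact not_p4At_modularize_of_inner_mem hH.1 hd hc hb ha hp.reverse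
    | simp only [P4At, modularize_adj_of_iff, modularize_adj_of_mem_of_notMem,
        modularize_adj_of_notMem_of_mem, ha, hb, hc, hd, not_false_eq_true, iff_self] at hp
      first | exact hH.1 ⟨a, b, c, d, hp⟩ | tauto

theorem not_exists_c4At_modularize (hC4 : ¬∃ a b c d, C4At H a b c d) :
    ¬∃ a b c d, C4At (modularize H M) a b c d := by
  rintro ⟨a, b, c, d, hp⟩
  by_cases ha : a ∈ M <;> by_cases hb : b ∈ M <;> by_cases hc : c ∈ M <;> by_cases hd : d ∈ M
  all_goals first
    | exact not_c4At_modularize_of_one_mem hC4 ha hb hc hd hp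
    | exact not_c4At_modularize_of_one_mem hC4 hb hc hd ha hp.rotate
    | exact not_c4At_modularize_of_one_mem hC4 hc hd ha hb hp.rotate.rotate
    | exact not_c4At_modularize_of_one_mem hC4 hd ha hb hc hp.rotate.rotate.rotate
    | exact not_c4At_modularize_of_opposite_mem hC4 ha hb hc hd hp
    | exact not_c4At_modularize_of_opposite_mem hC4 hb hc hd ha hp.rotate
    | simp only [C4At, modularize_adj_of_iff, modularize_adj_of_mem_of_notMem,
        modularize_adj_of_notMem_of_mem, ha, hb, hc, hd, not_false_eq_true, iff_self] at hp
      first | exact hC4 ⟨a, b, c, d, hp⟩ | tauto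

theorem isTriviallyPerfect_modularize (hH : IsTriviallyPerfect H) :
    IsTriviallyPerfect (modularize H M) :=
  ⟨not_exists_p4At_modularize hH, not_exists_c4At_modularize hH.2⟩

end

theorem stmt12 {V : Type*} (G Gh : SimpleGraph V) (M : Set V)
    (hM : IsModule G M) (hmin : IsMinimalTPCompletion G Gh) :
    IsModule Gh M := by
  obtain ⟨⟨hle, htp⟩, hmin⟩ := hmin
  rw [← hmin _ (le_modularize hM hle) (modularize_le Gh M) (isTriviallyPerfect_modularize htp)]
  exact isModule_modularize Gh M
end

section
/- Let G be a graph in which every vertex is contained in some induced P₄ or C₄, and suppose that every non-edge {u,v} of G is a candidate edge of at most k induced P₄'s and C₄'s (a candidate edge of an induced path or cycle v₁v₂v₃v₄ is {v₁,v₃} or {v₂,v₄}). If G admits a trivially perfect completion of size at most k, then |V(G)| ≤ 2k² + 2k. -/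
/-!
Fix a completion `Gh` with at most `k` added edges. Every vertex `x` lies in an induced P₄ or C₄
of `G`, and `Gh` must contain one of its two candidate edges; charge `x` to that added edge.
The vertices charged to an added edge `uv` all lie in candidate P₄'s/C₄'s of `uv`; there are at
most `k` of those, each contributing at most two vertices besides `u` and `v`. Hence every added
edge is charged at most `2k + 2` times, and `|V| ≤ k (2k + 2)`.
-/

open scoped Classical

def InducesP4orC4 {V : Type*} (G : SimpleGraph V) (F : Finset V) : Prop :=
  ∃ a b c d : V, (F : Set V) = {a, b, c, d} ∧ (P4At G a b c d ∨ C4At G a b c d)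

def IsCandidateOf {V : Type*} (G : SimpleGraph V) (u v : V) (F : Finset V) : Prop :=
  InducesP4orC4 G F ∧ u ∈ F ∧ v ∈ F ∧ u ≠ v ∧ ¬G.Adj u v ∧
    ∃ w ∈ F, G.Adj u w ∧ G.Adj v w

open Finset

theorem Finset.card_biUnion_le_of_forall_pair_mem {α : Type*} [DecidableEq α]
    {C : Finset (Finset α)} {u v : α} {m : ℕ} (huv : u ≠ v)
    (hC : ∀ F ∈ C, u ∈ F ∧ v ∈ F ∧ #F ≤ m + 2) :
    #(C.biUnion id) ≤ m * #C + 2 := by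
  have hsub : C.biUnion id ⊆ {u, v} ∪ C.biUnion (· \ {u, v}) := by
    intro x hx
    by_cases hxuv : x ∈ ({u, v} : Finset α)
    · exact mem_union_left _ hxuv
    obtain ⟨F, hF, hxF⟩ := mem_biUnion.mp hx
    exact mem_union_right _ (mem_biUnion.mpr ⟨F, hF, mem_sdiff.mpr ⟨hxF, hxuv⟩⟩)
  have hrest : #(C.biUnion (· \ {u, v})) ≤ #C * m := by
    refine card_biUnion_le_card_mul C _ m fun F hF => ?_
    obtain ⟨hu, hv, hcard⟩ := hC F hF
    rw [card_sdiff_of_subset (insert_subset hu (singleton_subset_iff.mpr hv)), card_pair huv]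
    omega
  calc #(C.biUnion id) ≤ #({u, v} : Finset α) + #(C.biUnion (· \ {u, v})) :=
        (card_le_card hsub).trans (card_union_le _ _)
    _ ≤ m * #C + 2 := by linarith [card_le_two (a := u) (b := v)]

section Candidates

variable {V : Type*} {G : SimpleGraph V}

theorem IsCandidateOf.symm {u v : V} {F : Finset V} (h : IsCandidateOf G u v F) :
    IsCandidateOf G v u F := by
  obtain ⟨hF, hu, hv, huv, hnadj, w, hw, huw, hvw⟩ := h
  exact ⟨hF, hv, hu, huv.symm, fun h => hnadj h.symm, w, hw, hvw, huw⟩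

theorem InducesP4orC4.card_le_four {F : Finset V} (hF : InducesP4orC4 G F) : #F ≤ 4 := by
  obtain ⟨a, b, c, d, hFeq, -⟩ := hF
  have : F = {a, b, c, d} := coe_injective (by simpa using hFeq)
  exact this ▸ Finset.card_le_four

theorem IsTriviallyPerfect.adj_or_adj_of_adj_of_adj_of_adj {H : SimpleGraph V}
    (hH : IsTriviallyPerfect H) {a b c d : V} (hac : a ≠ c) (hbd : b ≠ d) (had : a ≠ d)
    (hab : H.Adj a b) (hbc : H.Adj b c) (hcd : H.Adj c d) : H.Adj a c ∨ H.Adj b d := by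
  by_contra! h
  by_cases hda : H.Adj d a
  · exact hH.2 ⟨a, b, c, d, hab.ne, hac, had, hbc.ne, hbd, hcd.ne, hab, hbc, hcd, hda, h.1, h.2⟩
  · exact hH.1 ⟨a, b, c, d, hab.ne, hac, had, hbc.ne, hbd, hcd.ne, hab, hbc, hcd, h.1, h.2,
      fun had' => hda had'.symm⟩

theorem InducesP4orC4.exists_isCandidateOf_adj {Gh : SimpleGraph V} {F : Finset V}
    (hF : InducesP4orC4 G F) (hGh : IsTPCompletion G Gh) :
    ∃ u v, IsCandidateOf G u v F ∧ Gh.Adj u v := by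
  obtain ⟨a, b, c, d, hFeq, hpath⟩ := id hF
  have hmem : ∀ x ∈ ({a, b, c, d} : Set V), x ∈ F := fun x hx => by
    rwa [← mem_coe, hFeq]
  -- a P₄ and a C₄ on `a b c d` share the path `a b c d` with non-edges `ac` and `bd`
  obtain ⟨-, hac, had, -, hbd, -, hab, hbc, hcd, hnac, hnbd⟩ :
      a ≠ b ∧ a ≠ c ∧ a ≠ d ∧ b ≠ c ∧ b ≠ d ∧ c ≠ d ∧
        G.Adj a b ∧ G.Adj b c ∧ G.Adj c d ∧ ¬G.Adj a c ∧ ¬G.Adj b d := by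
    rcases hpath with ⟨h1, h2, h3, h4, h5, h6, h7, h8, h9, h10, h11, -⟩ |
      ⟨h1, h2, h3, h4, h5, h6, h7, h8, h9, -, h10, h11⟩ <;>
    exact ⟨h1, h2, h3, h4, h5, h6, h7, h8, h9, h10, h11⟩
  rcases hGh.2.adj_or_adj_of_adj_of_adj_of_adj hac hbd had (hGh.1 hab) (hGh.1 hbc)
    (hGh.1 hcd) with h | h
  · exact ⟨a, c, ⟨hF, hmem a (by simp), hmem c (by simp), hac, hnac, b, hmem b (by simp),
      hab, hbc.symm⟩, h⟩
  · exact ⟨b, d, ⟨hF, hmem b (by simp), hmem d (by simp), hbd, hnbd, c, hmem c (by simp),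
      hbc, hcd.symm⟩, h⟩

variable [Fintype V]

noncomputable def candidateCover (G : SimpleGraph V) (u v : V) : Finset V :=
  (univ.filter (IsCandidateOf G u v)).biUnion id

theorem mem_candidateCover_of_sym2_eq {a b u v x : V} {F : Finset V}
    (hF : IsCandidateOf G a b F) (hx : x ∈ F) (he : s(a, b) = s(u, v)) :
    x ∈ candidateCover G u v := by
  have huv : IsCandidateOf G u v F := by
    rcases Sym2.eq_iff.mp he with ⟨rfl, rfl⟩ | ⟨rfl, rfl⟩
    exacts [hF, hF.symm]
  exact mem_biUnion.mpr ⟨F, mem_filter.mpr ⟨mem_univ F, huv⟩, hx⟩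

theorem card_candidateCover_le {u v : V} (huv : u ≠ v) :
    #(candidateCover G u v) ≤ 2 * {F : Finset V | IsCandidateOf G u v F}.ncard + 2 := by
  rw [Set.ncard_eq_toFinset_card', Set.toFinset_ofPred]
  refine card_biUnion_le_of_forall_pair_mem huv fun F hF => ?_
  have hF := (mem_filter.mp hF).2
  exact ⟨hF.2.1, hF.2.2.1, hF.1.card_le_four⟩

end Candidates

theorem stmt13 {V : Type*} [Fintype V] (G : SimpleGraph V) (k : ℕ)
    (hcover : ∀ x : V, ∃ F : Finset V, x ∈ F ∧ InducesP4orC4 G F)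
    (hbound : ∀ u v : V, u ≠ v → ¬G.Adj u v →
      {F : Finset V | IsCandidateOf G u v F}.ncard ≤ k)
    (hyes : ∃ Gh : SimpleGraph V, IsTPCompletion G Gh ∧ (Gh.edgeSet \ G.edgeSet).ncard ≤ k) :
    Fintype.card V ≤ 2 * k ^ 2 + 2 * k := by
  obtain ⟨Gh, hGh, hk⟩ := hyes
  choose F hxF hF using hcover
  choose u v hcand hadj using fun x => (hF x).exists_isCandidateOf_adj hGh
  set D := (Gh.edgeSet \ G.edgeSet).toFinset
  have hmaps : ∀ x ∈ univ, s(u x, v x) ∈ D := fun x _ =>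
    Set.mem_toFinset.mpr ⟨hadj x, (hcand x).2.2.2.2.1⟩
  have hfiber : ∀ e ∈ D, #{x ∈ univ | s(u x, v x) = e} ≤ 2 * k + 2 := by
    intro e he
    induction e using Sym2.ind with
    | _ a b =>
      obtain ⟨hab, hnab⟩ := Set.mem_toFinset.mp he
      calc #{x ∈ univ | s(u x, v x) = s(a, b)} ≤ #(candidateCover G a b) :=
            card_le_card fun x hx =>
              mem_candidateCover_of_sym2_eq (hcand x) (hxF x) (mem_filter.mp hx).2
        _ ≤ 2 * k + 2 := by
            linarith [card_candidateCover_le (G := G) hab.ne, hbound a b hab.ne hnab]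
  calc Fintype.card V ≤ (2 * k + 2) * #D := card_le_mul_card_image_of_maps_to hmaps _ hfiber
    _ ≤ (2 * k + 2) * k := by
        gcongr
        rwa [← Set.ncard_eq_toFinset_card']
    _ = 2 * k ^ 2 + 2 * k := by ring
end

section
/- Every solution to the trivially perfect completion problem contains at least one candidate edge of each induced P₄ and C₄: if v₁v₂v₃v₄ is an induced path or cycle of G, and E₊ is a set of non-edges of G such that G + E₊ has no induced P₄ or C₄, then {v₁,v₃} ∈ E₊ or {v₂,v₄} ∈ E₊. -/
open scoped Classical

/-! Adding edges keeps the four path or cycle edges, so if neither candidate edge is added the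
four vertices still induce a `P₄` or a `C₄` (a `P₄` turns into a `C₄` when `{v₁, v₄}` is added). -/

section

variable {W : Type*} {H H' : SimpleGraph W} {a b c d : W}

theorem not_adj_candidates (hpat : P4At H a b c d ∨ C4At H a b c d) :
    ¬H.Adj a c ∧ ¬H.Adj b d := by
  rcases hpat with ⟨-, -, -, -, -, -, -, -, -, hac, hbd, -⟩ | ⟨-, -, -, -, -, -, -, -, -, -, hac, hbd⟩
  <;> exact ⟨hac, hbd⟩

theorem P4At.of_le (hle : H ≤ H') (hp : P4At H a b c d) (hac : ¬H'.Adj a c)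
    (hbd : ¬H'.Adj b d) : P4At H' a b c d ∨ C4At H' a b c d := by
  obtain ⟨hab, hac', had, hbc, hbd', hcd, eab, ebc, ecd, -, -, -⟩ := hp
  by_cases ead : H'.Adj a d
  · exact Or.inr ⟨hab, hac', had, hbc, hbd', hcd, hle eab, hle ebc, hle ecd, ead.symm, hac, hbd⟩
  · exact Or.inl ⟨hab, hac', had, hbc, hbd', hcd, hle eab, hle ebc, hle ecd, hac, hbd, ead⟩

theorem C4At.of_le (hle : H ≤ H') (hp : C4At H a b c d) (hac : ¬H'.Adj a c)
    (hbd : ¬H'.Adj b d) : C4At H' a b c d := by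
  obtain ⟨hab, hac', had, hbc, hbd', hcd, eab, ebc, ecd, eda, -, -⟩ := hp
  exact ⟨hab, hac', had, hbc, hbd', hcd, hle eab, hle ebc, hle ecd, hle eda, hac, hbd⟩

theorem IsTriviallyPerfect.adj_or_adj_of_le (hH' : IsTriviallyPerfect H') (hle : H ≤ H')
    (hpat : P4At H a b c d ∨ C4At H a b c d) : H'.Adj a c ∨ H'.Adj b d := by
  by_contra! ⟨hac, hbd⟩
  rcases hpat with hp | hc
  · rcases hp.of_le hle hac hbd with hp' | hc'
    · exact hH'.1 ⟨a, b, c, d, hp'⟩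
    · exact hH'.2 ⟨a, b, c, d, hc'⟩
  · exact hH'.2 ⟨a, b, c, d, hc.of_le hle hac hbd⟩

theorem SimpleGraph.mem_of_sup_fromEdgeSet_adj {E : Set (Sym2 W)}
    (h : (H ⊔ SimpleGraph.fromEdgeSet E).Adj a b) (hH : ¬H.Adj a b) : s(a, b) ∈ E :=
  (h.resolve_left hH).1

end

theorem stmt14_general {V : Type*} (G : SimpleGraph V) (v1 v2 v3 v4 : V)
    (hpat : P4At G v1 v2 v3 v4 ∨ C4At G v1 v2 v3 v4)
    (E : Set (Sym2 V))
    (htp : IsTriviallyPerfect (G ⊔ SimpleGraph.fromEdgeSet E)) :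
    s(v1, v3) ∈ E ∨ s(v2, v4) ∈ E := by
  obtain ⟨h13, h24⟩ := not_adj_candidates hpat
  exact (htp.adj_or_adj_of_le le_sup_left hpat).imp
    (SimpleGraph.mem_of_sup_fromEdgeSet_adj · h13) (SimpleGraph.mem_of_sup_fromEdgeSet_adj · h24)

theorem stmt14 {V : Type*} [Fintype V] (G : SimpleGraph V) (v1 v2 v3 v4 : V)
    (hpat : P4At G v1 v2 v3 v4 ∨ C4At G v1 v2 v3 v4)
    (E : Set (Sym2 V)) (hdisj : Disjoint E G.edgeSet)
    (htp : IsTriviallyPerfect (G ⊔ SimpleGraph.fromEdgeSet E)) :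
    s(v1, v3) ∈ E ∨ s(v2, v4) ∈ E :=
  stmt14_general G v1 v2 v3 v4 hpat E htp
end

section
/- Let G be a simple graph and v a vertex not contained in any induced 2K₂, C₄, or C₅ of G. Then the minimum number of edge deletions needed to make G − v a split graph equals the minimum number needed to make G a split graph. -/
open scoped Classical

/-!
Deleting edges to reach a split graph amounts to choosing a clique `C` and deleting every edge
with both ends outside `C`; so `sedNum G` is the least `splitCost G C` over cliques `C`. A clique
`C` of `G - v` costs exactly `splitCost G (insert v C)`, hence it suffices to replace each clique
`C ∌ v` of `G` by a clique of `G` costing no more than `insert v C`.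

As `v` lies in no induced 2K₂, C₄ or C₅, either the non-neighbours of `v` are independent or
`N(v)` is a clique. In the first case `v` can join `C` after expelling its unique non-neighbour
`c ∈ C`, possibly replaced by a neighbour `w` of `c` outside. In the second case neighbours of `v`
are brought into `C` one by one (again by exchanging at most one vertex) until `N(v) ⊆ C`, and then
`v` is isolated outside `C`. An exchange `c ↦ w` never raises the cost because every edge from `c`
to the outside is matched by an edge from `w`.
-/

section SplitCost

variable {V : Type*} {G : SimpleGraph V}

noncomputable def splitCost (G : SimpleGraph V) (C : Set V) : ℕ :=
  (G.edgeSet ∩ Cᶜ.sym2).ncard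

theorem sedNum_le_splitCost {C : Set V} (hC : G.IsClique C) : sedNum G ≤ splitCost G C := by
  refine Nat.sInf_le ⟨_, Set.inter_subset_left, rfl, C, fun a ha b hb hab => ?_, ?_⟩
  · simp [hC ha hb hab, ha]
  · intro a ha b hb _ hadj
    simp_all

theorem exists_isClique_splitCost_le_sedNum [Finite V] (G : SimpleGraph V) :
    ∃ C, G.IsClique C ∧ splitCost G C ≤ sedNum G := by
  have hne : {n | ∃ E ⊆ G.edgeSet, E.ncard = n ∧ IsSplit (G.deleteEdges E)}.Nonempty :=
    ⟨_, G.edgeSet, subset_rfl, rfl, ∅, SimpleGraph.isClique_empty, fun _ _ _ _ _ hadj => by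
      simp at hadj⟩
  obtain ⟨E, -, hcard, C, hC, hI⟩ := Nat.sInf_mem hne
  refine ⟨C, fun a ha b hb hab => (SimpleGraph.deleteEdges_adj.mp (hC ha hb hab)).1, ?_⟩
  rw [sedNum, ← hcard]
  refine Set.ncard_le_ncard ?_ (Set.toFinite E)
  rintro ⟨a, b⟩ ⟨hadj, ha, hb⟩
  by_contra hE
  exact hI ha hb hadj.ne (SimpleGraph.deleteEdges_adj.mpr ⟨hadj, hE⟩)

theorem splitCost_anti [Finite V] {C D : Set V} (h : C ⊆ D) : splitCost G D ≤ splitCost G C := by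
  refine Set.ncard_le_ncard (Set.inter_subset_inter_right _ ?_) (Set.toFinite _)
  rintro ⟨a, b⟩ ⟨ha, hb⟩
  exact ⟨fun h' => ha (h h'), fun h' => hb (h h')⟩

theorem splitCost_sdiff_singleton {D : Set V} {c : V} (h : ∀ x ∉ D, ¬G.Adj c x) :
    splitCost G (D \ {c}) = splitCost G D := by
  unfold splitCost
  congr 1
  ext ⟨a, b⟩
  simp only [Set.mem_inter_iff, SimpleGraph.mem_edgeSet, Set.mk_mem_sym2_iff, Set.mem_compl_iff,
    Set.mem_sdiff, Set.mem_singleton_iff, not_and, not_not]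
  grind [SimpleGraph.Adj.symm, SimpleGraph.irrefl]

theorem splitCost_exchange_le [Finite V] {D : Set V} {c w : V} (hc : c ∈ D) (hw : w ∉ D)
    (h : ∀ x ∉ D, x ≠ w → G.Adj c x → G.Adj w x) :
    splitCost G (insert w (D \ {c})) ≤ splitCost G D := by
  have hcw : c ≠ w := ne_of_mem_of_not_mem hc hw
  refine Set.ncard_le_ncard_of_injOn (Sym2.map (Equiv.swap c w)) ?_
    (Sym2.map.injective (Equiv.injective _)).injOn (Set.toFinite _)
  rintro ⟨a, b⟩ ⟨hab, ha, hb⟩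
  simp only [SimpleGraph.mem_edgeSet, Set.mem_compl_iff, Set.mem_insert_iff,
    Set.mem_sdiff, Set.mem_singleton_iff, not_or, not_and, not_not] at hab ha hb
  simp only [Sym2.map_mk, Set.mem_inter_iff, SimpleGraph.mem_edgeSet, Set.mk_mem_sym2_iff,
    Set.mem_compl_iff, Equiv.swap_apply_def]
  grind [SimpleGraph.Adj.symm, SimpleGraph.irrefl]

theorem splitCost_le_insert_of_neighborSet_subset {C : Set V} {v : V} (hvC : v ∉ C)
    (hN : G.neighborSet v ⊆ C) : splitCost G C ≤ splitCost G (insert v C) := by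
  conv_lhs => rw [← Set.insert_sdiff_self_of_notMem hvC]
  exact (splitCost_sdiff_singleton fun x hx hvx => hx (Set.mem_insert_of_mem _ (hN hvx))).le

end SplitCost

theorem splitCost_induce_ne {V : Type*} (G : SimpleGraph V) (v : V) (T : Set {u : V | u ≠ v}) :
    splitCost (G.induce {u | u ≠ v}) T = splitCost G (insert v (Subtype.val '' T)) := by
  rw [splitCost, ← Set.ncard_image_of_injective _ (Sym2.map.injective Subtype.val_injective)]
  congr 1
  ext e
  induction e using Sym2.ind with
  | _ a b =>
  simp only [Set.mem_image, Set.mem_inter_iff, SimpleGraph.mem_edgeSet, Set.mk_mem_sym2_iff,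
    Sym2.exists, Sym2.map_mk, Sym2.eq_iff, Set.mem_compl_iff, Set.mem_insert_iff, not_or]
  constructor
  · rintro ⟨x, y, ⟨hxy, hx, hy⟩, ⟨rfl, rfl⟩ | ⟨rfl, rfl⟩⟩
    · simpa [hx, hy] using ⟨hxy, x.2, y.2⟩
    · simpa [hx, hy] using ⟨hxy.symm, y.2, x.2⟩
  · rintro ⟨hab, ⟨hav, ha⟩, ⟨hbv, hb⟩⟩
    exact ⟨⟨a, hav⟩, ⟨b, hbv⟩, ⟨hab, fun h => ha ⟨_, h, rfl⟩, fun h => hb ⟨_, h, rfl⟩⟩,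
      Or.inl ⟨rfl, rfl⟩⟩

theorem sedNum_induce_ne_le {V : Type*} [Finite V] (G : SimpleGraph V) (v : V) :
    sedNum (G.induce {u | u ≠ v}) ≤ sedNum G := by
  obtain ⟨C, hC, hle⟩ := exists_isClique_splitCost_le_sedNum G
  have hC₀ : (G.induce {u | u ≠ v}).IsClique (Subtype.val ⁻¹' C) :=
    fun a ha b hb hab => hC ha hb (Subtype.val_injective.ne hab)
  have hsub : C ⊆ insert v ({u | u ≠ v} ∩ C) := fun x hx =>
    or_iff_not_imp_left.mpr fun hxv => ⟨hxv, hx⟩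
  calc sedNum (G.induce {u | u ≠ v})
      ≤ splitCost G (insert v ({u | u ≠ v} ∩ C)) := by
        rw [← Subtype.image_preimage_coe, ← splitCost_induce_ne]
        exact sedNum_le_splitCost hC₀
    _ ≤ sedNum G := (splitCost_anti hsub).trans hle

section ForbiddenSubgraphs

variable {V : Type*} {G : SimpleGraph V} {a b c d e : V}

theorem twoK2At_of_adj (hab : G.Adj a b) (hcd : G.Adj c d) (hac : ¬G.Adj a c)
    (had : ¬G.Adj a d) (hbc : ¬G.Adj b c) (hbd : ¬G.Adj b d) : TwoK2At G a b c d := by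
  refine ⟨hab.ne, ?_, ?_, ?_, ?_, hcd.ne, hab, hcd, hac, had, hbc, hbd⟩ <;> rintro rfl
  · exact hbc hab.symm
  · exact hac hcd.symm
  · exact hac hab
  · exact had hab

theorem c4At_of_adj (hac' : a ≠ c) (hbd' : b ≠ d) (hab : G.Adj a b) (hbc : G.Adj b c)
    (hcd : G.Adj c d) (hda : G.Adj d a) (hac : ¬G.Adj a c) (hbd : ¬G.Adj b d) :
    C4At G a b c d :=
  ⟨hab.ne, hac', hda.ne.symm, hbc.ne, hbd', hcd.ne, hab, hbc, hcd, hda, hac, hbd⟩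

theorem c5At_of_adj (hab : G.Adj a b) (hbc : G.Adj b c) (hcd : G.Adj c d) (hde : G.Adj d e)
    (hea : G.Adj e a) (hac : ¬G.Adj a c) (had : ¬G.Adj a d) (hbd : ¬G.Adj b d)
    (hbe : ¬G.Adj b e) (hce : ¬G.Adj c e) : C5At G a b c d e := by
  refine ⟨hab.ne, ?_, ?_, hea.ne.symm, hbc.ne, ?_, ?_, hcd.ne, ?_, hde.ne,
    hab, hbc, hcd, hde, hea, hac, had, hbd, hbe, hce⟩ <;> rintro rfl <;>
    simp_all [SimpleGraph.adj_comm]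

end ForbiddenSubgraphs

section LocallySplit

variable {V : Type*} {G : SimpleGraph V} {v : V}

theorem not_adj_of_adj_of_not_adj_neighbors (h2K2 : ∀ a b c, ¬TwoK2At G v a b c)
    (hC4 : ∀ a b c, ¬C4At G v a b c) (hC5 : ∀ a b c d, ¬C5At G v a b c d) {w₁ w₂ x y : V}
    (hw₁ : G.Adj v w₁) (hw₂ : G.Adj v w₂) (hw : w₁ ≠ w₂) (hw₁₂ : ¬G.Adj w₁ w₂)
    (hxv : x ≠ v) (hyv : y ≠ v) (hx : ¬G.Adj v x) (hy : ¬G.Adj v y) (hxy : G.Adj x y) :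
    ¬G.Adj w₁ x := by
  intro h₁x
  have h₂x : ¬G.Adj w₂ x := fun h₂x =>
    hC4 w₁ x w₂ (c4At_of_adj hxv.symm hw hw₁ h₁x h₂x.symm hw₂.symm hx hw₁₂)
  have h₂y : G.Adj w₂ y := by
    by_contra h₂y
    exact h2K2 w₂ x y (twoK2At_of_adj hw₂ hxy hx hy h₂x h₂y)
  have h₁y : ¬G.Adj w₁ y := fun h₁y =>
    hC4 w₁ y w₂ (c4At_of_adj hyv.symm hw hw₁ h₁y h₂y.symm hw₂.symm hy hw₁₂)
  exact hC5 w₁ x y w₂ (c5At_of_adj hw₁ h₁x hxy h₂y.symm hw₂.symm hx hy h₁y hw₁₂ (h₂x ·.symm))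

theorem isIndep_compl_closedNbhd_or_isClique_neighborSet (h2K2 : ∀ a b c, ¬TwoK2At G v a b c)
    (hC4 : ∀ a b c, ¬C4At G v a b c) (hC5 : ∀ a b c d, ¬C5At G v a b c d) :
    IsIndep G (closedNbhd G v)ᶜ ∨ G.IsClique (G.neighborSet v) := by
  by_contra! h
  obtain ⟨hIndep, hClique⟩ := h
  simp only [IsIndep, Set.Pairwise, not_forall, not_not] at hIndep
  obtain ⟨x, hx, y, hy, -, hxy⟩ := hIndep
  simp only [SimpleGraph.IsClique, Set.Pairwise, not_forall] at hClique
  obtain ⟨w₁, hw₁, w₂, hw₂, hw, hw₁₂⟩ := hClique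
  simp only [closedNbhd, Set.mem_compl_iff, Set.mem_insert_iff, not_or,
    SimpleGraph.mem_neighborSet] at hx hy hw₁ hw₂
  have h₁ : G.Adj w₁ x ∨ G.Adj w₁ y := by
    by_contra! h
    exact h2K2 w₁ x y (twoK2At_of_adj hw₁ hxy hx.2 hy.2 h.1 h.2)
  rcases h₁ with h₁ | h₁
  · exact not_adj_of_adj_of_not_adj_neighbors h2K2 hC4 hC5 hw₁ hw₂ hw hw₁₂ hx.1 hy.1 hx.2 hy.2
      hxy h₁
  · exact not_adj_of_adj_of_not_adj_neighbors h2K2 hC4 hC5 hw₁ hw₂ hw hw₁₂ hy.1 hx.1 hy.2 hx.2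
      hxy.symm h₁

end LocallySplit

section ExtendClique

variable {V : Type*} [Finite V] {G : SimpleGraph V} {v : V}

theorem exists_isClique_splitCost_le_insert_of_isIndep (hC4 : ∀ a b c, ¬C4At G v a b c)
    (hM : IsIndep G (closedNbhd G v)ᶜ) {C : Set V} (hC : G.IsClique C) (hvC : v ∉ C) :
    ∃ C', G.IsClique C' ∧ splitCost G C' ≤ splitCost G (insert v C) := by
  have hM' : ∀ x y, x ≠ v → ¬G.Adj v x → y ≠ v → G.Adj x y → G.Adj v y := by
    intro x y hxv hvx hyv hxy
    by_contra hvy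
    exact hM (by simp [closedNbhd, hxv, hvx]) (by simp [closedNbhd, hyv, hvy]) hxy.ne hxy
  by_cases hc : ∀ c ∈ C, G.Adj v c
  · exact ⟨insert v C, hC.insert fun c hcC _ => hc c hcC, le_rfl⟩
  push Not at hc
  obtain ⟨c, hcC, hvc⟩ := hc
  have hcv : c ≠ v := ne_of_mem_of_not_mem hcC hvC
  have hCc : ∀ u ∈ C, u ≠ c → G.Adj v u := fun u huC huc =>
    hM' c u hcv hvc (ne_of_mem_of_not_mem huC hvC) (hC hcC huC huc.symm)
  have hD : G.IsClique (insert v C \ {c}) := by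
    rw [← Set.insert_sdiff_singleton_comm hcv.symm]
    exact (hC.subset Set.sdiff_subset).insert fun u hu _ => hCc u hu.1 hu.2
  by_cases hw : ∃ w ∉ insert v C, G.Adj c w
  · obtain ⟨w, hw, hcw⟩ := hw
    have hwv : w ≠ v := fun h => hw (h ▸ Set.mem_insert _ _)
    have hvw : G.Adj v w := hM' c w hcv hvc hwv hcw
    have hwx : ∀ x, x ≠ w → G.Adj c x → G.Adj v x → G.Adj w x := fun x hxw hcx hvx => by
      by_contra hwx
      exact hC4 w c x (c4At_of_adj hcv.symm hxw.symm hvw hcw.symm hcx hvx.symm hvc hwx)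
    refine ⟨insert w (insert v C \ {c}), hD.insert ?_,
      splitCost_exchange_le (Set.mem_insert_of_mem _ hcC) hw ?_⟩
    · rintro u ⟨rfl | huC, huc⟩ hwu
      · exact hvw.symm
      · exact hwx u (Ne.symm hwu) (hC hcC huC (Ne.symm huc)) (hCc u huC huc)
    · intro x hx hxw hcx
      have hxv : x ≠ v := fun h => hx (h ▸ Set.mem_insert _ _)
      exact hwx x hxw hcx (hM' c x hcv hvc hxv hcx)
  · push Not at hw
    exact ⟨_, hD, (splitCost_sdiff_singleton hw).le⟩

theorem exists_isClique_neighborSet_sdiff_ssubset (h2K2 : ∀ a b c, ¬TwoK2At G v a b c)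
    (hN : G.IsClique (G.neighborSet v)) {C : Set V} (hC : G.IsClique C) (hvC : v ∉ C)
    (hNC : ¬G.neighborSet v ⊆ C) :
    ∃ C₂, G.IsClique C₂ ∧ v ∉ C₂ ∧ G.neighborSet v \ C₂ ⊂ G.neighborSet v \ C ∧
      splitCost G (insert v C₂) ≤ splitCost G (insert v C) := by
  obtain ⟨w, hvw, hwC⟩ := Set.not_subset.mp hNC
  have hwv : w ≠ v := hvw.ne.symm
  have hNw : ∀ x, x ≠ w → G.Adj v x → G.Adj w x := fun x hxw hvx => hN hvw hvx hxw.symm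
  have hssubset : ∀ C₂, w ∈ C₂ → C ∩ G.neighborSet v ⊆ C₂ →
      G.neighborSet v \ C₂ ⊂ G.neighborSet v \ C := fun C₂ hwC₂ hCC₂ =>
    ⟨fun x hx => ⟨hx.1, fun hxC => hx.2 (hCC₂ ⟨hxC, hx.1⟩)⟩, fun h => (h ⟨hvw, hwC⟩).2 hwC₂⟩
  by_cases hd : ∃ d ∈ C, ¬G.Adj w d
  · obtain ⟨d, hdC, hwd⟩ := hd
    have hdw : d ≠ w := ne_of_mem_of_not_mem hdC hwC
    have hvd : ¬G.Adj v d := fun hvd => hwd (hNw d hdw hvd)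
    have hwx : ∀ x, x ≠ w → G.Adj d x → G.Adj w x := fun x hxw hdx => by
      by_contra hwx
      have hvx : ¬G.Adj v x := fun hvx => hwx (hNw x hxw hvx)
      exact h2K2 w d x (twoK2At_of_adj hvw hdx hvd hvx hwd hwx)
    refine ⟨insert w (C \ {d}), ?_, ?_, hssubset _ (Set.mem_insert _ _) ?_, ?_⟩
    · exact (hC.subset Set.sdiff_subset).insert fun u hu huw =>
        hwx u (Ne.symm huw) (hC hdC hu.1 (Ne.symm hu.2))
    · rintro (h | h)
      · exact hwv h.symm
      · exact hvC h.1
    · rintro u ⟨huC, hvu⟩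
      exact Set.mem_insert_of_mem _ ⟨huC, fun h => hvd (h ▸ hvu)⟩
    · rw [Set.insert_comm, Set.insert_sdiff_singleton_comm (ne_of_mem_of_not_mem hdC hvC).symm]
      exact splitCost_exchange_le (Set.mem_insert_of_mem _ hdC) (by simp [hwv, hwC])
        fun x _ hxw hdx => hwx x hxw hdx
  · push Not at hd
    refine ⟨insert w C, hC.insert fun u hu _ => hd u hu, ?_,
      hssubset _ (Set.mem_insert _ _) fun u hu => Set.mem_insert_of_mem _ hu.1, ?_⟩
    · rintro (h | h)
      · exact hwv h.symm
      · exact hvC h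
    · exact splitCost_anti (Set.insert_subset_insert (Set.subset_insert _ _))

theorem exists_isClique_splitCost_le_insert_of_isClique_neighborSet
    (h2K2 : ∀ a b c, ¬TwoK2At G v a b c) (hN : G.IsClique (G.neighborSet v)) {C : Set V}
    (hC : G.IsClique C) (hvC : v ∉ C) :
    ∃ C', G.IsClique C' ∧ splitCost G C' ≤ splitCost G (insert v C) := by
  by_cases hNC : G.neighborSet v ⊆ C
  · exact ⟨C, hC, splitCost_le_insert_of_neighborSet_subset hvC hNC⟩
  obtain ⟨C₂, hC₂, hvC₂, hlt, hle⟩ := exists_isClique_neighborSet_sdiff_ssubset h2K2 hN hC hvC hNC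
  obtain ⟨C', hC', hle'⟩ :=
    exists_isClique_splitCost_le_insert_of_isClique_neighborSet h2K2 hN hC₂ hvC₂
  exact ⟨C', hC', hle'.trans hle⟩
termination_by (G.neighborSet v \ C).ncard
decreasing_by exact Set.ncard_lt_ncard hlt (Set.toFinite _)

end ExtendClique

theorem exists_isClique_splitCost_le_insert {V : Type*} [Finite V] {G : SimpleGraph V} {v : V}
    (h2K2 : ∀ a b c, ¬TwoK2At G v a b c) (hC4 : ∀ a b c, ¬C4At G v a b c)
    (hC5 : ∀ a b c d, ¬C5At G v a b c d) {C : Set V} (hC : G.IsClique C) (hvC : v ∉ C) :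
    ∃ C', G.IsClique C' ∧ splitCost G C' ≤ splitCost G (insert v C) :=
  (isIndep_compl_closedNbhd_or_isClique_neighborSet h2K2 hC4 hC5).elim
    (fun hM => exists_isClique_splitCost_le_insert_of_isIndep hC4 hM hC hvC)
    (fun hN => exists_isClique_splitCost_le_insert_of_isClique_neighborSet h2K2 hN hC hvC)

theorem stmt16 {V : Type*} [Fintype V] (G : SimpleGraph V) (v : V)
    (h2K2 : ∀ a b c d : V, TwoK2At G a b c d → v ∉ ({a, b, c, d} : Set V))
    (hC4 : ∀ a b c d : V, C4At G a b c d → v ∉ ({a, b, c, d} : Set V))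
    (hC5 : ∀ a b c d e : V, C5At G a b c d e → v ∉ ({a, b, c, d, e} : Set V)) :
    sedNum (G.induce {u : V | u ≠ v}) = sedNum G := by
  refine le_antisymm (sedNum_induce_ne_le G v) ?_
  obtain ⟨C₀, hC₀, hle⟩ := exists_isClique_splitCost_le_sedNum (G.induce {u | u ≠ v})
  have hC : G.IsClique (Subtype.val '' C₀) := by
    rintro _ ⟨a, ha, rfl⟩ _ ⟨b, hb, rfl⟩ hab
    exact hC₀ ha hb (ne_of_apply_ne _ hab)
  obtain ⟨C', hC', hle'⟩ := exists_isClique_splitCost_le_insert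
    (fun a b c h => h2K2 v a b c h (Set.mem_insert _ _))
    (fun a b c h => hC4 v a b c h (Set.mem_insert _ _))
    (fun a b c d h => hC5 v a b c d h (Set.mem_insert _ _)) hC (fun ⟨u, _, hu⟩ => u.2 hu)
  calc sedNum G ≤ splitCost G (insert v (Subtype.val '' C₀)) :=
        (sedNum_le_splitCost hC').trans hle'
    _ = splitCost (G.induce {u | u ≠ v}) C₀ := (splitCost_induce_ne G v C₀).symm
    _ ≤ sedNum (G.induce {u | u ≠ v}) := hle
end
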